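/- arXiv:math/9912204 — 4 statements merged into one kernel-verified Lean document; each statement's English description precedes it below -/
import Mathlib

section
/- Let n ≥ 1 be an integer and 1 ≤ r ≤ 2, 1 ≤ s ≤ 2. For a measurable function F : [0,∞)×ℝ^n → ℂ and t ∈ ℝ, let Γ_t = {(t′,x) : t′ ≥ 0, t−1 ≤ t′+|x| ≤ t+1}. Then ∫_0^∞ ‖F·1_{Γ_t}‖²_{L^r_{t′}L^s_x} dt ≤ 2 ‖F‖²_{L^r_{t′}L^s_x([0,∞)×ℝ^n)}. -/
open MeasureTheory Metric Real Set
open scoped ENNReal NNReal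

noncomputable section

/-- Euclidean space `ℝⁿ`. -/
abbrev Euc (n : ℕ) := EuclideanSpace ℝ (Fin n)

/-- The Fourier transform with the convention `f̂(ξ) = ∫ e^{-i x·ξ} f(x) dx`. -/
def FT {n : ℕ} (f : Euc n → ℂ) (ξ : Euc n) : ℂ :=
  ∫ x : Euc n, Complex.exp (-(Complex.I * ((inner ℝ x ξ : ℝ) : ℂ))) * f x

/-- Squared inhomogeneous Sobolev norm `‖f‖²_{H^γ} = ∫ (1+|ξ|²)^γ |f̂(ξ)|² dξ`. -/
def HSq {n : ℕ} (γ : ℝ) (f : Euc n → ℂ) : ℝ≥0∞ :=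
  ∫⁻ ξ : Euc n, ENNReal.ofReal ((1 + ‖ξ‖ ^ 2) ^ γ) * (‖FT f ξ‖₊ : ℝ≥0∞) ^ 2

/-- Inhomogeneous Sobolev norm `‖f‖_{H^γ}`. -/
def HNorm {n : ℕ} (γ : ℝ) (f : Euc n → ℂ) : ℝ≥0∞ := HSq γ f ^ (1 / 2 : ℝ)

/-- Squared homogeneous Sobolev norm `‖f‖²_{Ḣ^γ} = ∫ |ξ|^{2γ} |f̂(ξ)|² dξ`. -/
def HdotSq {n : ℕ} (γ : ℝ) (f : Euc n → ℂ) : ℝ≥0∞ :=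
  ∫⁻ ξ : Euc n, ENNReal.ofReal (‖ξ‖ ^ (2 * γ)) * (‖FT f ξ‖₊ : ℝ≥0∞) ^ 2

/-- Homogeneous Sobolev norm `‖f‖_{Ḣ^γ}`. -/
def HdotNorm {n : ℕ} (γ : ℝ) (f : Euc n → ℂ) : ℝ≥0∞ := HdotSq γ f ^ (1 / 2 : ℝ)

/-- `L^r`-norm in time of an `ℝ≥0∞`-valued function (ess-sup if `r = ∞`). -/
def LpT (r : ℝ≥0∞) (g : ℝ → ℝ≥0∞) : ℝ≥0∞ :=
  if r = ∞ then essSup g volume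
  else (∫⁻ t : ℝ, g t ^ r.toReal) ^ (1 / r.toReal)

/-- Mixed norm `‖F‖_{L^r_t L^s_x(ℝ×ℝⁿ)}`. -/
def mixedNorm {n : ℕ} (r s : ℝ≥0∞) (F : ℝ → Euc n → ℂ) : ℝ≥0∞ :=
  LpT r fun t => eLpNorm (F t) s volume

/-- Restriction of a space-time function to a set `A`, extended by zero. -/
def restr {n : ℕ} (A : Set (ℝ × Euc n)) (F : ℝ → Euc n → ℂ) : ℝ → Euc n → ℂ :=
  fun t x => A.indicator (fun p : ℝ × Euc n => F p.1 p.2) (t, x)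

/-- The Laplace–Beltrami operator
`Δ_g u = (det g)^{-1/2} ∂_i ((det g)^{1/2} g^{ij} ∂_j u)` of a Riemannian metric `g`. -/
def LaplaceBeltrami {n : ℕ} (g : Euc n → Matrix (Fin n) (Fin n) ℝ) (u : Euc n → ℂ)
    (x : Euc n) : ℂ :=
  (Real.sqrt ((g x).det))⁻¹ •
    ∑ i : Fin n, fderiv ℝ
      (fun y => Real.sqrt ((g y).det) •
        ∑ j : Fin n, ((g y)⁻¹ i j) • fderiv ℝ u y (EuclideanSpace.single j 1)) x
      (EuclideanSpace.single i 1)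

/-- The Euclidean Laplacian `Δu = ∑ ∂²u/∂x_i²`. -/
def EucLap {n : ℕ} (u : Euc n → ℂ) (x : Euc n) : ℂ :=
  ∑ i : Fin n, fderiv ℝ (fun y => fderiv ℝ u y (EuclideanSpace.single i 1)) x
    (EuclideanSpace.single i 1)

/-- Time derivative `∂_t u` of a space-time function. -/
def dt {n : ℕ} (u : ℝ → Euc n → ℂ) : ℝ → Euc n → ℂ :=
  fun t x => deriv (fun τ => u τ x) t

/-- Spatial partial derivative `∂_{x_i} u`. -/
def dxi {n : ℕ} (i : Fin n) (u : Euc n → ℂ) (x : Euc n) : ℂ :=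
  fderiv ℝ u x (EuclideanSpace.single i 1)

/-- The surface measure on the unit sphere `S^{n-1} ⊆ ℝⁿ`. -/
def sphereMeasure (n : ℕ) : Measure (sphere (0 : Euc n) 1) :=
  (volume : Measure (Euc n)).toSphere

/-- The half-wave propagator `e^{it|D|}`. -/
def halfWave {n : ℕ} (t : ℝ) (f : Euc n → ℂ) (x : Euc n) : ℂ :=
  ((2 * π) ^ n)⁻¹ •
    ∫ ξ : Euc n, Complex.exp (Complex.I * ((inner ℝ x ξ : ℝ) : ℂ)) *
      Complex.exp (Complex.I * (t : ℂ) * (‖ξ‖ : ℂ)) * FT f ξ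

/-- The solution of the free wave equation with Cauchy data `f, g`, given by the
Fourier formula `u(t,x) = (2π)^{-n} ∫ e^{ix·ξ}(cos(t|ξ|) f̂(ξ) + sin(t|ξ|)/|ξ| ĝ(ξ)) dξ`. -/
def waveSol {n : ℕ} (f g : Euc n → ℂ) (t : ℝ) (x : Euc n) : ℂ :=
  ((2 * π) ^ n)⁻¹ •
    ∫ ξ : Euc n, Complex.exp (Complex.I * ((inner ℝ x ξ : ℝ) : ℂ)) *
      (Complex.cos ((t : ℂ) * (‖ξ‖ : ℂ)) * FT f ξ +
        (Complex.sin ((t : ℂ) * (‖ξ‖ : ℂ)) / (‖ξ‖ : ℂ)) * FT g ξ)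

/-!
With `a = r/2`, `b = s/2 ∈ (0, 1]` and `G = |F|²`, the squared mixed norm of `F·1_A` is the
iterated quasi-norm `‖ ‖G·1_A‖_{L^b_x} ‖_{L^a_{t'}}`. For `p ≤ 1`, Minkowski's integral
inequality for the exponent `1/p`, applied to `f^p`, reads
`∫ ‖f(t,·)‖_{L^p} dt ≤ ‖∫ f(t,·) dt‖_{L^p}`. Applying it twice moves the `t`-integral inside
both quasi-norms, where `∫_0^∞ 1_{Γ_t}(t',x) dt ≤ 2·1_{t' ≥ 0}` because `(t',x) ∈ Γ_t` confines
`t` to an interval of length 2.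

For `p < 1` that inequality follows from the reverse Hölder bound
`‖g‖_{L^p} ≤ (∫ g Ψ^{p-1}) (∫ Ψ^p)^{(1-p)/p}`, valid for every positive weight `Ψ`, applied with
`Ψ` a small positive perturbation of `∫ f(t,·) dt`.
-/

section Minkowski

variable {α β : Type*} [MeasurableSpace α] [MeasurableSpace β] {μ : Measure α} {ν : Measure β}
  {p : ℝ}

theorem eLpNorm'_le_lintegral_mul_rpow_mul (hp0 : 0 < p) (hp1 : p < 1) {g Ψ : β → ℝ≥0∞}
    (hg : AEMeasurable g ν) (hΨ : AEMeasurable Ψ ν) (hΨ0 : ∀ᵐ y ∂ν, Ψ y ≠ 0)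
    (hΨtop : ∀ᵐ y ∂ν, Ψ y ≠ ∞) :
    eLpNorm' g p ν ≤ (∫⁻ y, g y * Ψ y ^ (p - 1) ∂ν) * (∫⁻ y, Ψ y ^ p ∂ν) ^ ((1 - p) / p) := by
  have hconj : (1 / p).HolderConjugate (1 / (1 - p)) :=
    Real.holderConjugate_iff.mpr ⟨one_lt_one_div hp0 hp1, by simp only [one_div, inv_inv]; ring⟩
  have hsplit : (fun y => g y ^ p)
      =ᵐ[ν] (fun y => (g y * Ψ y ^ (p - 1)) ^ p) * fun y => Ψ y ^ (p * (1 - p)) := by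
    filter_upwards [hΨ0, hΨtop] with y h0 htop
    simp only [Pi.mul_apply]
    rw [ENNReal.mul_rpow_of_nonneg _ _ hp0.le, ← ENNReal.rpow_mul, mul_assoc,
      ← ENNReal.rpow_add _ _ h0 htop, show (p - 1) * p + p * (1 - p) = 0 by ring,
      ENNReal.rpow_zero, mul_one]
  have hHolder := ENNReal.lintegral_mul_le_Lp_mul_Lq ν hconj
    (f := fun y => (g y * Ψ y ^ (p - 1)) ^ p) (g := fun y => Ψ y ^ (p * (1 - p)))
    ((hg.mul (hΨ.pow_const _)).pow_const p) (hΨ.pow_const _)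
  simp only [← ENNReal.rpow_mul, one_div_one_div, mul_one_div_cancel hp0.ne',
    ENNReal.rpow_one, mul_one_div, mul_div_cancel_right₀ _ (sub_pos.2 hp1).ne'] at hHolder
  rw [eLpNorm'_eq_lintegral_enorm]
  simp only [enorm_eq_self]
  rw [lintegral_congr_ae hsplit]
  refine (ENNReal.rpow_le_rpow hHolder (by positivity)).trans_eq ?_
  rw [ENNReal.mul_rpow_of_nonneg _ _ (by positivity), ← ENNReal.rpow_mul, ← ENNReal.rpow_mul,
    mul_one_div_cancel hp0.ne', ENNReal.rpow_one, mul_one_div]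

variable [SFinite μ]

theorem lintegral_eLpNorm'_le_eLpNorm'_of_lintegral_le [SFinite ν] (hp0 : 0 < p) (hp1 : p < 1)
    {f : α → β → ℝ≥0∞} (hf : Measurable (Function.uncurry f)) {Ψ : β → ℝ≥0∞}
    (hΨ : Measurable Ψ) (hΨ0 : ∀ᵐ y ∂ν, Ψ y ≠ 0) (hΨtop : ∀ᵐ y ∂ν, Ψ y ≠ ∞)
    (hfΨ : ∀ y, ∫⁻ t, f t y ∂μ ≤ Ψ y) :
    ∫⁻ t, eLpNorm' (f t) p ν ∂μ ≤ eLpNorm' Ψ p ν := by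
  set D := ∫⁻ y, Ψ y ^ p ∂ν
  have hweighted : Measurable fun q : α × β => f q.1 q.2 * Ψ q.2 ^ (p - 1) :=
    hf.mul ((hΨ.pow_const _).comp measurable_snd)
  have hdom : ∀ᵐ y ∂ν, (∫⁻ t, f t y ∂μ) * Ψ y ^ (p - 1) ≤ Ψ y ^ p := by
    filter_upwards [hΨ0, hΨtop] with y h0 htop
    calc (∫⁻ t, f t y ∂μ) * Ψ y ^ (p - 1) ≤ Ψ y ^ (1 : ℝ) * Ψ y ^ (p - 1) := by
          rw [ENNReal.rpow_one]; gcongr; exact hfΨ y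
      _ = Ψ y ^ p := by rw [← ENNReal.rpow_add _ _ h0 htop, add_sub_cancel]
  calc ∫⁻ t, eLpNorm' (f t) p ν ∂μ
      ≤ ∫⁻ t, (∫⁻ y, f t y * Ψ y ^ (p - 1) ∂ν) * D ^ ((1 - p) / p) ∂μ :=
        lintegral_mono fun t => eLpNorm'_le_lintegral_mul_rpow_mul hp0 hp1
          (hf.comp measurable_prodMk_left).aemeasurable hΨ.aemeasurable hΨ0 hΨtop
    _ = (∫⁻ y, (∫⁻ t, f t y ∂μ) * Ψ y ^ (p - 1) ∂ν) * D ^ ((1 - p) / p) := by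
        rw [lintegral_mul_const _ hweighted.lintegral_prod_right',
          lintegral_lintegral_swap hweighted.aemeasurable]
        congr 1
        refine lintegral_congr fun y => ?_
        dsimp only
        exact lintegral_mul_const _ (hf.comp measurable_prodMk_right)
    _ ≤ D * D ^ ((1 - p) / p) := by gcongr; exact lintegral_mono_ae hdom
    _ = eLpNorm' Ψ p ν := by
        rw [eLpNorm'_eq_lintegral_enorm]
        simp only [enorm_eq_self]
        nth_rw 1 [← ENNReal.rpow_one D]
        rw [← ENNReal.rpow_add_of_nonneg _ _ zero_le_one (div_nonneg (sub_pos.2 hp1).le hp0.le)]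
        congr 1
        field_simp
        ring

theorem lintegral_eLpNorm'_le_eLpNorm'_lintegral [SigmaFinite ν] (hp0 : 0 < p) (hp1 : p ≤ 1)
    {f : α → β → ℝ≥0∞} (hf : Measurable (Function.uncurry f)) :
    ∫⁻ t, eLpNorm' (f t) p ν ∂μ ≤ eLpNorm' (fun y => ∫⁻ t, f t y ∂μ) p ν := by
  rcases hp1.eq_or_lt with rfl | hp1
  · simp only [eLpNorm'_eq_lintegral_enorm, enorm_eq_self, ENNReal.rpow_one, div_one]
    exact (lintegral_lintegral_swap hf.aemeasurable).le
  set Φ := fun y => ∫⁻ t, f t y ∂μ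
  have hΦ : Measurable Φ := hf.lintegral_prod_left'
  rw [eLpNorm'_eq_lintegral_enorm, one_div, ENNReal.le_rpow_inv_iff hp0]
  simp only [enorm_eq_self]
  refine ENNReal.le_of_forall_pos_le_add fun ε hε hC => ?_
  obtain ⟨w, hw0, hw, hwε⟩ :=
    exists_pos_lintegral_lt_of_sigmaFinite ν (ENNReal.coe_ne_zero.2 hε.ne')
  set Ψ := fun y => Φ y + (w y : ℝ≥0∞) ^ p⁻¹
  have hΨ : Measurable Ψ := hΦ.add (hw.coe_nnreal_ennreal.pow_const _)
  have hΨp : ∫⁻ y, Ψ y ^ p ∂ν ≤ ∫⁻ y, Φ y ^ p ∂ν + ε := by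
    calc ∫⁻ y, Ψ y ^ p ∂ν ≤ ∫⁻ y, Φ y ^ p + (w y : ℝ≥0∞) ∂ν := by
          refine lintegral_mono fun y =>
            (ENNReal.rpow_add_le_add_rpow _ _ hp0.le hp1.le).trans ?_
          rw [← ENNReal.rpow_mul, inv_mul_cancel₀ hp0.ne', ENNReal.rpow_one]
      _ ≤ ∫⁻ y, Φ y ^ p ∂ν + ε := by
          rw [lintegral_add_left (hΦ.pow_const _)]; exact add_le_add_right hwε.le _
  have hΨ0 : ∀ y, Ψ y ≠ 0 := fun y =>
    ((ENNReal.rpow_pos (ENNReal.coe_pos.2 (hw0 y)) ENNReal.coe_ne_top).trans_le le_add_self).ne'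
  have hΨtop : ∀ᵐ y ∂ν, Ψ y ≠ ∞ := by
    have hfin := hΨp.trans_lt (ENNReal.add_lt_top.2 ⟨hC, ENNReal.coe_lt_top⟩)
    filter_upwards [ae_lt_top (hΨ.pow_const p) hfin.ne] with y hy
    exact fun h => by simp [h, ENNReal.top_rpow_of_pos hp0] at hy
  calc (∫⁻ t, eLpNorm' (f t) p ν ∂μ) ^ p ≤ eLpNorm' Ψ p ν ^ p := by
        gcongr
        exact lintegral_eLpNorm'_le_eLpNorm'_of_lintegral_le hp0 hp1 hf hΨ
          (.of_forall hΨ0) hΨtop fun y => le_self_add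
    _ ≤ ∫⁻ y, Φ y ^ p ∂ν + ε := by
        rw [eLpNorm'_eq_lintegral_enorm, ← ENNReal.rpow_mul, one_div_mul_cancel hp0.ne',
          ENNReal.rpow_one]
        simpa only [enorm_eq_self] using hΨp

theorem measurable_eLpNorm'_of_measurable_uncurry [SFinite ν] {f : α → β → ℝ≥0∞}
    (hf : Measurable (Function.uncurry f)) (p : ℝ) : Measurable fun t => eLpNorm' (f t) p ν := by
  simp only [eLpNorm'_eq_lintegral_enorm, enorm_eq_self]
  exact ((hf.pow_const p).lintegral_prod_right').pow_const _

end Minkowski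

theorem ENNReal.toReal_div_two_mem_Ioc {r : ℝ≥0∞} (h0 : r ≠ 0) (h2 : r ≤ 2) :
    r.toReal / 2 ∈ Ioc 0 1 := by
  have hr : r ≠ ∞ := (h2.trans_lt (by norm_num)).ne
  have : r.toReal ≤ 2 := by simpa using ENNReal.toReal_mono (by norm_num) h2
  exact ⟨by have := ENNReal.toReal_pos h0 hr; positivity, by linarith⟩

theorem mixedNorm_sq_eq_eLpNorm' {n : ℕ} {r s : ℝ≥0∞} (hr : r ≠ ∞) (hs0 : s ≠ 0)
    (hs : s ≠ ∞) (H : ℝ → Euc n → ℂ) :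
    mixedNorm r s H ^ 2 = eLpNorm' (fun t => eLpNorm' (fun x => ‖H t x‖ₑ ^ (2 : ℝ))
      (s.toReal / 2) volume) (r.toReal / 2) volume := by
  have hsq (R : ℝ) (g : ℝ → ℝ≥0∞) :
      eLpNorm' g R volume ^ 2 = eLpNorm' (g · ^ (2 : ℝ)) (R / 2) volume := by
    simpa using (eLpNorm'_enorm_rpow g (R / 2) 2 two_pos).symm
  have hinner (t : ℝ) : eLpNorm' (fun x => ‖H t x‖ₑ ^ (2 : ℝ)) (s.toReal / 2) volume
      = eLpNorm (H t) s volume ^ (2 : ℝ) := by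
    rw [eLpNorm'_enorm_rpow _ _ _ two_pos, div_mul_cancel₀ _ two_ne_zero,
      eLpNorm_eq_eLpNorm' hs0 hs]
  simp only [hinner, mixedNorm, LpT, if_neg hr]
  rw [← hsq, eLpNorm'_eq_lintegral_enorm]
  simp only [enorm_eq_self]

theorem mixedNorm_restr_sq_eq_eLpNorm' {n : ℕ} {r s : ℝ≥0∞} (hr : r ≠ ∞) (hs0 : s ≠ 0)
    (hs : s ≠ ∞) (A : Set (ℝ × Euc n)) (F : ℝ → Euc n → ℂ) :
    mixedNorm r s (restr A F) ^ 2 = eLpNorm' (fun t => eLpNorm' (fun x =>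
      A.indicator (fun q => ‖F q.1 q.2‖ₑ ^ (2 : ℝ)) (t, x)) (s.toReal / 2) volume)
        (r.toReal / 2) volume := by
  rw [mixedNorm_sq_eq_eLpNorm' hr hs0 hs]
  simp only [restr, enorm_indicator_eq_indicator_enorm]
  congr! 4 with t x
  by_cases h : (t, x) ∈ A <;> simp [h]

def lightconeShell {E : Type*} [Norm E] (t : ℝ) : Set (ℝ × E) :=
  {tx | 0 ≤ tx.1 ∧ t - 1 ≤ tx.1 + ‖tx.2‖ ∧ tx.1 + ‖tx.2‖ ≤ t + 1}

theorem mem_lightconeShell_iff {E : Type*} [Norm E] {t : ℝ} {q : ℝ × E} :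
    q ∈ lightconeShell t ↔ 0 ≤ q.1 ∧ t ∈ Icc (q.1 + ‖q.2‖ - 1) (q.1 + ‖q.2‖ + 1) := by
  simp only [lightconeShell, mem_ofPred_eq, mem_Icc]
  constructor <;> rintro ⟨h₀, h₁, h₂⟩ <;> exact ⟨h₀, by linarith, by linarith⟩

theorem lintegral_indicator_lightconeShell_le {E : Type*} [Norm E] (g : ℝ × E → ℝ≥0∞)
    (q : ℝ × E) :
    ∫⁻ t in Ioi 0, (lightconeShell t).indicator g q
      ≤ 2 * {tx : ℝ × E | 0 ≤ tx.1}.indicator g q := by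
  set c := {tx : ℝ × E | 0 ≤ tx.1}.indicator g q
  have hshell (t : ℝ) : (lightconeShell t).indicator g q
      = (Icc (q.1 + ‖q.2‖ - 1) (q.1 + ‖q.2‖ + 1)).indicator (fun _ => c) t := by
    classical
    by_cases hq : 0 ≤ q.1 <;> simp [c, indicator_apply, mem_lightconeShell_iff, hq]
  calc ∫⁻ t in Ioi 0, (lightconeShell t).indicator g q
      ≤ ∫⁻ t, (Icc (q.1 + ‖q.2‖ - 1) (q.1 + ‖q.2‖ + 1)).indicator (fun _ => c) t := by
        simp_rw [hshell]; exact setLIntegral_le_lintegral _ _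
    _ = 2 * c := by
        rw [lintegral_indicator_const measurableSet_Icc, Real.volume_Icc, mul_comm]
        norm_num

theorem measurable_indicator_lightconeShell {E : Type*} [SeminormedAddGroup E]
    [MeasurableSpace E] [OpensMeasurableSpace E] {g : ℝ × E → ℝ≥0∞} (hg : Measurable g) :
    Measurable fun q : ℝ × (ℝ × E) => (lightconeShell q.1).indicator g q.2 := by
  have hS : MeasurableSet {q : ℝ × (ℝ × E) | q.2 ∈ lightconeShell q.1} := by
    simp only [lightconeShell, ofPred_and]
    refine (measurableSet_le measurable_const ?_).inter ((measurableSet_le ?_ ?_).inter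
      (measurableSet_le ?_ ?_)) <;> fun_prop
  exact (hg.comp measurable_snd).indicator hS

theorem truncated_lightcone_mixed_norm_general
    {n : ℕ} {r s : ℝ≥0∞}
    (hr1 : 1 ≤ r) (hr2 : r ≤ 2) (hs1 : 1 ≤ s) (hs2 : s ≤ 2)
    (F : ℝ → Euc n → ℂ)
    (hF : Measurable (fun tx : ℝ × Euc n => F tx.1 tx.2)) :
    ∫⁻ t in Ioi (0 : ℝ),
        mixedNorm r s
          (restr {tx : ℝ × Euc n |
            0 ≤ tx.1 ∧ t - 1 ≤ tx.1 + ‖tx.2‖ ∧ tx.1 + ‖tx.2‖ ≤ t + 1} F) ^ 2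
      ≤ 2 * mixedNorm r s (restr {tx : ℝ × Euc n | 0 ≤ tx.1} F) ^ 2 := by
  have hs0 : s ≠ 0 := (zero_lt_one.trans_le hs1).ne'
  obtain ⟨ha0, ha1⟩ := ENNReal.toReal_div_two_mem_Ioc (zero_lt_one.trans_le hr1).ne' hr2
  obtain ⟨hb0, hb1⟩ := ENNReal.toReal_div_two_mem_Ioc hs0 hs2
  simp only [mixedNorm_restr_sq_eq_eLpNorm' (hr2.trans_lt (by norm_num)).ne hs0
    (hs2.trans_lt (by norm_num)).ne]
  set a := r.toReal / 2
  set b := s.toReal / 2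
  set G : ℝ × Euc n → ℝ≥0∞ := fun q => ‖F q.1 q.2‖ₑ ^ (2 : ℝ)
  set Q := {tx : ℝ × Euc n | 0 ≤ tx.1}
  have hΓG := measurable_indicator_lightconeShell (hF.enorm.pow_const (2 : ℝ))
  have hQG : Measurable (Q.indicator G) :=
    (hF.enorm.pow_const _).indicator (measurableSet_le measurable_const measurable_fst)
  calc ∫⁻ t in Ioi 0, eLpNorm' (fun t' => eLpNorm' (fun x =>
          (lightconeShell t).indicator G (t', x)) b volume) a volume
      ≤ eLpNorm' (fun t' => ∫⁻ t in Ioi 0, eLpNorm' (fun x =>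
          (lightconeShell t).indicator G (t', x)) b volume) a volume :=
        lintegral_eLpNorm'_le_eLpNorm'_lintegral ha0 ha1 <|
          measurable_eLpNorm'_of_measurable_uncurry (ν := volume)
            (f := fun (q : ℝ × ℝ) x => (lightconeShell q.1).indicator G (q.2, x))
            (hΓG.comp (measurable_fst.fst.prodMk (measurable_fst.snd.prodMk measurable_snd))) b
    _ ≤ eLpNorm' (fun t' => eLpNorm' (fun x => ∫⁻ t in Ioi 0,
          (lightconeShell t).indicator G (t', x)) b volume) a volume :=
        eLpNorm'_mono_enorm_ae ha0.le (.of_forall fun t' => by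
          simpa only [enorm_eq_self] using lintegral_eLpNorm'_le_eLpNorm'_lintegral hb0 hb1
            (f := fun t x => (lightconeShell t).indicator G (t', x))
            (hΓG.comp (measurable_fst.prodMk (measurable_const.prodMk measurable_snd))))
    _ ≤ 2 * eLpNorm' (fun t' => eLpNorm' (fun x => Q.indicator G (t', x)) b volume) a volume :=
        eLpNorm'_le_mul_eLpNorm'_of_ae_le_mul
          (measurable_eLpNorm'_of_measurable_uncurry (ν := volume)
            (f := fun t' x => Q.indicator G (t', x)) hQG b).aestronglyMeasurable
          (.of_forall fun t' => by
            simpa only [enorm_eq_self] using eLpNorm'_le_mul_eLpNorm'_of_ae_le_mul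
              (g := fun x => Q.indicator G (t', x))
              (hQG.comp measurable_prodMk_left).aestronglyMeasurable
              (.of_forall fun x => by
                simpa only [enorm_eq_self] using lintegral_indicator_lightconeShell_le G (t', x))
              hb0)
          ha0

/-- The final step in the proof of Corollary 2.3 of Smith–Sogge: with
`Γ_t = {(t',x) : t' ≥ 0, t-1 ≤ t'+|x| ≤ t+1}` and `r, s ≤ 2`,
`∫_0^∞ ‖F·1_{Γ_t}‖²_{L^r_{t'}L^s_x} dt ≤ 2 ‖F‖²_{L^r_{t'}L^s_x([0,∞)×ℝⁿ)}`. -/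
theorem truncated_lightcone_mixed_norm
    {n : ℕ} (hn : 1 ≤ n) {r s : ℝ≥0∞}
    (hr1 : 1 ≤ r) (hr2 : r ≤ 2) (hs1 : 1 ≤ s) (hs2 : s ≤ 2)
    (F : ℝ → Euc n → ℂ)
    (hF : Measurable (fun tx : ℝ × Euc n => F tx.1 tx.2)) :
    ∫⁻ t in Ioi (0 : ℝ),
        mixedNorm r s
          (restr {tx : ℝ × Euc n |
            0 ≤ tx.1 ∧ t - 1 ≤ tx.1 + ‖tx.2‖ ∧ tx.1 + ‖tx.2‖ ≤ t + 1} F) ^ 2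
      ≤ 2 * mixedNorm r s (restr {tx : ℝ × Euc n | 0 ≤ tx.1} F) ^ 2 :=
  truncated_lightcone_mixed_norm_general hr1 hr2 hs1 hs2 F hF
end
end

section
/- Let n ≥ 1 be an integer, 2 ≤ p ≤ ∞, 2 ≤ q ≤ ∞, and ρ > 0. There is a constant C = C(ρ) < ∞ such that: for any sequence of measurable functions u_j : ℝ×ℝ^n → ℂ (j = 0,1,2,…) satisfying u_j(t,x) = 0 whenever t − j − |x| < −1, and such that the sum u(t,x) = Σ_{j=0}^∞ u_j(t,x) converges absolutely almost everywhere, one has ‖u‖²_{L^p_tL^q_x(ℝ×ℝ^n)} ≤ C Σ_{j=0}^∞ ‖e^{ρ(t−j−|x|)} u_j‖²_{L^p_tL^q_x(ℝ×ℝ^n)}. -/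
open MeasureTheory Metric Real Set
open scoped ENNReal NNReal

noncomputable section

/-! Write `c = t - |x|`. The support condition gives `u_j = e^{-ρ(c-j)} v_j` with
`v_j = e^{ρ(c-j)} u_j`, where only `j ≤ c + 1` contribute; the squared weights then sum to at
most a geometric series, so Cauchy–Schwarz gives the pointwise square-function bound
`|Σ u_j|² ≤ C Σ |v_j|²`. For `r ≥ 2` the square of an `L^r` norm is the `L^{r/2}` norm of the
square, and Minkowski's inequality in `L^{r/2}` carries such a bound from the integrand to the
norms; applying this first in `x` (with `r = q`) and then in `t` (with `r = p`) gives the claim. -/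

lemma ENNReal.tsum_mul_sq_le_sq_mul_sq (f g : ℕ → ℝ≥0∞) :
    (∑' j, f j * g j) ^ 2 ≤ (∑' j, f j ^ 2) * ∑' j, g j ^ 2 := by
  have h := ENNReal.lintegral_mul_le_Lp_mul_Lq Measure.count Real.HolderConjugate.two_two
    (measurable_of_countable f).aemeasurable (measurable_of_countable g).aemeasurable
  simp only [lintegral_count, Pi.mul_apply, ENNReal.rpow_two] at h
  calc (∑' j, f j * g j) ^ 2
      ≤ ((∑' j, f j ^ 2) ^ (1 / 2 : ℝ) * (∑' j, g j ^ 2) ^ (1 / 2 : ℝ)) ^ 2 := by gcongr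
    _ = (∑' j, f j ^ 2) * ∑' j, g j ^ 2 := by
        simp only [mul_pow, ← ENNReal.rpow_two, ← ENNReal.rpow_mul]
        norm_num

lemma ENNReal.iSup_rpow {ι : Sort*} (f : ι → ℝ≥0∞) {y : ℝ} (hy : 0 < y) :
    (⨆ i, f i) ^ y = ⨆ i, f i ^ y :=
  (ENNReal.orderIsoRpow y hy).map_iSup f

lemma ENNReal.ofReal_exp_pow (x : ℝ) (k : ℕ) :
    ENNReal.ofReal (exp x) ^ k = ENNReal.ofReal (exp (k * x)) := by
  rw [← ENNReal.ofReal_pow (exp_pos x).le, ← exp_nat_mul]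

def supportWeight (ρ c : ℝ) (j : ℕ) : ℝ≥0∞ :=
  if c - j < -1 then 0 else ENNReal.ofReal (exp (-(ρ * (c - j))))

def decayConst (ρ : ℝ) : ℝ≥0∞ :=
  ENNReal.ofReal (exp (2 * ρ)) * (1 - ENNReal.ofReal (exp (-(2 * ρ))))⁻¹

lemma decayConst_lt_top {ρ : ℝ} (hρ : 0 < ρ) : decayConst ρ < ∞ := by
  have hr : ENNReal.ofReal (exp (-(2 * ρ))) < 1 := by
    rw [ENNReal.ofReal_lt_one, Real.exp_lt_one_iff]; linarith
  exact ENNReal.mul_lt_top ENNReal.ofReal_lt_top (ENNReal.inv_lt_top.2 (tsub_pos_of_lt hr))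

lemma tsum_supportWeight_sq_le {ρ : ℝ} (hρ : 0 ≤ ρ) (c : ℝ) :
    ∑' j, supportWeight ρ c j ^ 2 ≤ decayConst ρ := by
  set r := ENNReal.ofReal (exp (-(2 * ρ)))
  -- `m` is the last index of nonzero weight; the squared weights are dominated by a geometric
  -- sequence in `m - j`.
  set m := ⌊c + 1⌋₊
  have hterm : ∀ j, supportWeight ρ c j ^ 2
      ≤ if j ≤ m then ENNReal.ofReal (exp (2 * ρ)) * r ^ (m - j) else 0 := by
    intro j
    unfold supportWeight
    split_ifs with hj hjm hjm
    · simp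
    · simp
    · have hm : (m : ℝ) ≤ c + 1 := Nat.floor_le (by linarith [(j.cast_nonneg : (0 : ℝ) ≤ j)])
      rw [ENNReal.ofReal_exp_pow, ENNReal.ofReal_exp_pow, ← ENNReal.ofReal_mul (exp_pos _).le,
        ← exp_add, Nat.cast_sub hjm]
      refine ENNReal.ofReal_le_ofReal (exp_le_exp.2 ?_)
      push_cast
      nlinarith
    · exact absurd (Nat.le_floor (by linarith)) hjm
  have hrange : ∀ j, j ∈ Finset.range (m + 1) ↔ j ≤ m := fun j => by
    rw [Finset.mem_range, Nat.lt_succ_iff]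
  calc ∑' j, supportWeight ρ c j ^ 2
      ≤ ∑' j, if j ≤ m then ENNReal.ofReal (exp (2 * ρ)) * r ^ (m - j) else 0 :=
        ENNReal.tsum_le_tsum hterm
    _ = ∑ j ∈ Finset.range (m + 1), ENNReal.ofReal (exp (2 * ρ)) * r ^ (m - j) := by
        rw [tsum_eq_sum fun j hj => if_neg ((hrange j).not.1 hj)]
        exact Finset.sum_congr rfl fun j hj => if_pos ((hrange j).1 hj)
    _ = ENNReal.ofReal (exp (2 * ρ)) * ∑ k ∈ Finset.range (m + 1), r ^ k := by
        rw [← Finset.mul_sum, ← Finset.sum_range_reflect (fun k => r ^ k)]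
        simp only [add_tsub_cancel_right]
    _ ≤ decayConst ρ := by
        rw [decayConst, ← ENNReal.tsum_geometric]
        gcongr
        exact ENNReal.sum_le_tsum _

lemma sq_tsum_le_decayConst_mul {ρ : ℝ} (hρ : 0 ≤ ρ) {c : ℝ} {a : ℕ → ℝ≥0∞}
    (ha : ∀ j : ℕ, c - j < -1 → a j = 0) :
    (∑' j, a j) ^ 2
      ≤ decayConst ρ * ∑' j : ℕ, (ENNReal.ofReal (exp (ρ * (c - j))) * a j) ^ 2 := by
  have hfactor : ∀ j : ℕ,
      a j = supportWeight ρ c j * (ENNReal.ofReal (exp (ρ * (c - j))) * a j) := by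
    intro j
    by_cases hj : c - j < -1
    · simp [ha j hj]
    · rw [supportWeight, if_neg hj, ← mul_assoc, ← ENNReal.ofReal_mul (exp_pos _).le,
        ← exp_add, neg_add_cancel, exp_zero, ENNReal.ofReal_one, one_mul]
  calc (∑' j, a j) ^ 2
      = (∑' j, supportWeight ρ c j * (ENNReal.ofReal (exp (ρ * (c - j))) * a j)) ^ 2 := by
        rw [← tsum_congr hfactor]
    _ ≤ (∑' j, supportWeight ρ c j ^ 2) *
          ∑' j : ℕ, (ENNReal.ofReal (exp (ρ * (c - j))) * a j) ^ 2 :=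
        ENNReal.tsum_mul_sq_le_sq_mul_sq _ _
    _ ≤ _ := by gcongr; exact tsum_supportWeight_sq_le hρ c

section Lp

variable {α : Type*} [MeasurableSpace α] {μ : Measure α} {p : ℝ≥0∞}

lemma eLpNorm_iSup_le {f : ℕ → α → ℝ≥0∞} (hf : ∀ n, AEMeasurable (f n) μ)
    (hmono : Monotone f) : eLpNorm (fun a => ⨆ n, f n a) p μ ≤ ⨆ n, eLpNorm (f n) p μ := by
  rcases eq_or_ne p 0 with rfl | hp0
  · simp
  rcases eq_or_ne p ∞ with rfl | hptop
  · simp only [eLpNorm_exponent_top, eLpNormEssSup, enorm_eq_self]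
    refine essSup_le_of_ae_le _ ?_
    filter_upwards [ae_all_iff.2 fun n => ENNReal.ae_le_essSup (f n)] with a ha
    exact iSup_le fun n => (ha n).trans (le_iSup_of_le n le_rfl)
  have hp : 0 < p.toReal := ENNReal.toReal_pos hp0 hptop
  simp only [eLpNorm_eq_lintegral_rpow_enorm_toReal hp0 hptop, enorm_eq_self,
    ENNReal.iSup_rpow _ hp]
  rw [lintegral_iSup' (fun n => (hf n).pow_const _)
    (ae_of_all _ fun a m k hmk => ENNReal.rpow_le_rpow (hmono hmk a) hp.le),
    ENNReal.iSup_rpow _ (by positivity)]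

lemma eLpNorm_tsum_le {f : ℕ → α → ℝ≥0∞} (hf : ∀ n, AEMeasurable (f n) μ) (hp : 1 ≤ p) :
    eLpNorm (fun a => ∑' j, f j a) p μ ≤ ∑' j, eLpNorm (f j) p μ := by
  simp only [ENNReal.tsum_eq_iSup_nat]
  refine (eLpNorm_iSup_le (fun N => Finset.aemeasurable_fun_sum _ fun j _ => hf j)
    fun M N hMN a => Finset.sum_le_sum_of_subset (Finset.range_subset_range.2 hMN)).trans
    (iSup_mono fun N => ?_)
  have := eLpNorm_sum_le (s := Finset.range N) (fun j _ => (hf j).aestronglyMeasurable) hp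
  rwa [Finset.sum_fn] at this

lemma eLpNorm_enorm_sq {ε : Type*} [TopologicalSpace ε] [ContinuousENorm ε] (f : α → ε)
    (r : ℝ≥0∞) : eLpNorm (fun a => ‖f a‖ₑ ^ 2) (r / 2) μ = eLpNorm f r μ ^ 2 := by
  have h := eLpNorm_enorm_rpow (μ := μ) (p := r / 2) f (q := 2) two_pos
  rw [ENNReal.ofReal_ofNat, ENNReal.div_mul_cancel two_ne_zero ENNReal.ofNat_ne_top] at h
  simpa only [ENNReal.rpow_two] using h

lemma eLpNorm_sq_le_mul_tsum_sq {ε ε' : Type*} [TopologicalSpace ε] [ContinuousENorm ε]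
    [TopologicalSpace ε'] [ContinuousENorm ε'] {r : ℝ≥0∞} (hr : 2 ≤ r) {C : ℝ≥0∞}
    {f : α → ε} {G : ℕ → α → ε'} (hG : ∀ j, AEStronglyMeasurable (G j) μ)
    (h : ∀ᵐ a ∂μ, ‖f a‖ₑ ^ 2 ≤ C * ∑' j, ‖G j a‖ₑ ^ 2) :
    eLpNorm f r μ ^ 2 ≤ C * ∑' j, eLpNorm (G j) r μ ^ 2 := by
  have hr2 : 1 ≤ r / 2 := by
    rwa [ENNReal.le_div_iff_mul_le (by simp) (by simp), one_mul]
  have hGsq : ∀ j, AEMeasurable (fun a => ‖G j a‖ₑ ^ 2) μ := fun j =>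
    (hG j).enorm.pow_const 2
  simp only [← eLpNorm_enorm_sq]
  calc eLpNorm (fun a => ‖f a‖ₑ ^ 2) (r / 2) μ
      ≤ C * eLpNorm (fun a => ∑' j, ‖G j a‖ₑ ^ 2) (r / 2) μ :=
        eLpNorm_le_mul_eLpNorm_of_ae_le_mul'' _ (AEMeasurable.tsum hGsq).aestronglyMeasurable
          (by simpa only [enorm_eq_self] using h)
    _ ≤ C * ∑' j, eLpNorm (fun a => ‖G j a‖ₑ ^ 2) (r / 2) μ := by
        gcongr; exact eLpNorm_tsum_le hGsq hr2

variable {β : Type*} [MeasurableSpace β] {ν : Measure β} [SFinite ν]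

lemma measurable_essSup_section {g : α × β → ℝ≥0∞} (hg : Measurable g) :
    Measurable fun a => essSup (fun b => g (a, b)) ν := by
  refine measurable_of_Iic fun c => ?_
  have hset : (fun a => essSup (fun b => g (a, b)) ν) ⁻¹' Iic c
      = (fun a => ν (Prod.mk a ⁻¹' {z | c < g z})) ⁻¹' {0} := by
    ext a
    simp only [mem_preimage, mem_Iic, mem_singleton_iff, ← not_le]
    change _ ↔ ν {b | ¬g (a, b) ≤ c} = 0
    rw [← ae_iff]
    exact ⟨fun h => (ENNReal.ae_le_essSup _).mono fun b hb => hb.trans h,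
      essSup_le_of_ae_le c⟩
  rw [hset]
  exact measurable_measure_prodMk_left (measurableSet_lt measurable_const hg)
    (measurableSet_singleton 0)

lemma measurable_eLpNorm_section {E : Type*} [NormedAddCommGroup E] [MeasurableSpace E]
    [OpensMeasurableSpace E] (s : ℝ≥0∞) {F : α → β → E}
    (hF : Measurable fun z : α × β => F z.1 z.2) : Measurable fun a => eLpNorm (F a) s ν := by
  rcases eq_or_ne s 0 with rfl | hs0
  · simp
  rcases eq_or_ne s ∞ with rfl | hstop
  · simpa only [eLpNorm_exponent_top, eLpNormEssSup] using measurable_essSup_section hF.enorm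
  · simp only [eLpNorm_eq_lintegral_rpow_enorm_toReal hs0 hstop]
    exact (hF.enorm.pow_const _).lintegral_prod_right'.pow_const _

end Lp

lemma LpT_eq_eLpNorm {r : ℝ≥0∞} (hr : r ≠ 0) (g : ℝ → ℝ≥0∞) :
    LpT r g = eLpNorm g r volume := by
  rcases eq_or_ne r ∞ with rfl | hrtop
  · simp [LpT, eLpNormEssSup]
  · simp [LpT, hrtop, eLpNorm_eq_lintegral_rpow_enorm_toReal hr hrtop]

theorem almost_orthogonal_sum_general
    {n : ℕ} {p q : ℝ≥0∞}
    (hp2 : 2 ≤ p) (hq2 : 2 ≤ q) {ρ : ℝ} (hρ : 0 < ρ) :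
    ∃ C : ℝ≥0∞, C < ∞ ∧ ∀ u : ℕ → ℝ → Euc n → ℂ,
      (∀ j, Measurable (fun tx : ℝ × Euc n => u j tx.1 tx.2)) →
      (∀ (j : ℕ) (t : ℝ) (x : Euc n), t - j - ‖x‖ < -1 → u j t x = 0) →
      (∀ᵐ tx : ℝ × Euc n, Summable fun j => ‖u j tx.1 tx.2‖) →
      mixedNorm p q (fun t x => ∑' j : ℕ, u j t x) ^ 2
        ≤ C * ∑' j : ℕ,
            mixedNorm p q (fun t x => Real.exp (ρ * (t - j - ‖x‖)) • u j t x) ^ 2 := by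
  refine ⟨decayConst ρ, decayConst_lt_top hρ, fun u hu hsupp _ => ?_⟩
  set v : ℕ → ℝ → Euc n → ℂ := fun j t x => Real.exp (ρ * (t - j - ‖x‖)) • u j t x
  have hv : ∀ j, Measurable fun tx : ℝ × Euc n => v j tx.1 tx.2 := fun j =>
    (by fun_prop : Measurable fun tx : ℝ × Euc n => Real.exp (ρ * (tx.1 - j - ‖tx.2‖))).smul (hu j)
  have hpoint : ∀ t x, ‖∑' j, u j t x‖ₑ ^ 2 ≤ decayConst ρ * ∑' j, ‖v j t x‖ₑ ^ 2 := by
    intro t x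
    have hvu : ∀ j : ℕ, ‖v j t x‖ₑ = ENNReal.ofReal (exp (ρ * (t - ‖x‖ - j))) * ‖u j t x‖ₑ := by
      intro j
      rw [enorm_smul, Real.enorm_of_nonneg (exp_pos _).le, sub_right_comm]
    simp only [hvu]
    exact (pow_le_pow_left' enorm_tsum_le_tsum_enorm 2).trans (sq_tsum_le_decayConst_mul hρ.le
      fun j hj => by rw [hsupp j t x (by rwa [sub_right_comm]), enorm_zero])
  have hspace : ∀ t, eLpNorm (fun x => ∑' j, u j t x) q volume ^ 2
      ≤ decayConst ρ * ∑' j, eLpNorm (v j t) q volume ^ 2 := fun t =>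
    eLpNorm_sq_le_mul_tsum_sq hq2
      (fun j => ((hv j).comp measurable_prodMk_left).aestronglyMeasurable) (ae_of_all _ (hpoint t))
  have hp0 : p ≠ 0 := (lt_of_lt_of_le two_pos hp2).ne'
  simp only [mixedNorm, LpT_eq_eLpNorm hp0]
  exact eLpNorm_sq_le_mul_tsum_sq hp2
    (fun j => (measurable_eLpNorm_section q (hv j)).aestronglyMeasurable)
    (ae_of_all _ fun t => by simpa only [enorm_eq_self] using hspace t)

/-- The almost-orthogonality summation step at the end of the proof of Theorem 1.1 of
Smith–Sogge: if each `u_j` is supported in `{t - j - |x| ≥ -1}` and `p, q ≥ 2`, then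
`‖Σ_j u_j‖²_{L^p_tL^q_x} ≤ C Σ_j ‖e^{ρ(t-j-|x|)} u_j‖²_{L^p_tL^q_x}`. -/
theorem almost_orthogonal_sum
    {n : ℕ} (hn : 1 ≤ n) {p q : ℝ≥0∞}
    (hp2 : 2 ≤ p) (hq2 : 2 ≤ q) {ρ : ℝ} (hρ : 0 < ρ) :
    ∃ C : ℝ≥0∞, C < ∞ ∧ ∀ u : ℕ → ℝ → Euc n → ℂ,
      (∀ j, Measurable (fun tx : ℝ × Euc n => u j tx.1 tx.2)) →
      (∀ (j : ℕ) (t : ℝ) (x : Euc n), t - j - ‖x‖ < -1 → u j t x = 0) →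
      (∀ᵐ tx : ℝ × Euc n, Summable fun j => ‖u j tx.1 tx.2‖) →
      mixedNorm p q (fun t x => ∑' j : ℕ, u j t x) ^ 2
        ≤ C * ∑' j : ℕ,
            mixedNorm p q (fun t x => Real.exp (ρ * (t - j - ‖x‖)) • u j t x) ^ 2 :=
  almost_orthogonal_sum_general hp2 hq2 hρ
end
end

section
/- Let X and Y be Banach spaces, let −∞ ≤ a < b ≤ ∞, and let K be a continuous function on {(t,s) : a < t,s < b} with values in B(X,Y), the space of bounded linear maps from X to Y. Let 1 ≤ p < q ≤ ∞ and C < ∞, and suppose that for every continuous, compactly supported f : (a,b) → X, the function Tf(t) = ∫_a^b K(t,s) f(s) ds satisfies ‖Tf‖_{L^q((a,b),Y)} ≤ C ‖f‖_{L^p((a,b),X)}. Then for every continuous, compactly supported f : (a,b) → X, the function Wf(t) = ∫_a^t K(t,s) f(s) ds satisfies ‖Wf‖_{L^q((a,b),Y)} ≤ (2^{−2(1/p−1/q)} · 2C / (1 − 2^{−(1/p−1/q)})) ‖f‖_{L^p((a,b),X)}. -/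
open MeasureTheory Set Filter
open scoped ENNReal Topology

noncomputable section

section CKAux

variable {X Y : Type*} [NormedAddCommGroup X] [NormedSpace ℝ X]
  [NormedAddCommGroup Y] [NormedSpace ℝ Y]

lemma ck_cont_integrand {I : Set ℝ} {K : ℝ → ℝ → X →L[ℝ] Y}
    (hK : ContinuousOn (fun ts : ℝ × ℝ => K ts.1 ts.2) (I ×ˢ I))
    {f : ℝ → X} (hf : Continuous f) :
    ContinuousOn (fun ts : ℝ × ℝ => K ts.1 ts.2 (f ts.2)) (I ×ˢ I) := by
  have h1 : ContinuousOn (fun ts : ℝ × ℝ => ((K ts.1 ts.2 : X →L[ℝ] Y), f ts.2)) (I ×ˢ I) :=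
    hK.prodMk ((hf.comp continuous_snd).continuousOn)
  exact isBoundedBilinearMap_apply.continuous.comp_continuousOn h1

lemma ck_integrableOn {I : Set ℝ} {K : ℝ → ℝ → X →L[ℝ] Y}
    (hK : ContinuousOn (fun ts : ℝ × ℝ => K ts.1 ts.2) (I ×ˢ I))
    {f : ℝ → X} (hf : Continuous f) (hfc : HasCompactSupport f) (hfs : tsupport f ⊆ I)
    {t : ℝ} (ht : t ∈ I) : IntegrableOn (fun s => K t s (f s)) I volume := by
  have hgI : ContinuousOn (fun s => K t s (f s)) I := by
    have hc : ContinuousOn (fun s : ℝ => ((t, s) : ℝ × ℝ)) I :=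
      (Continuous.prodMk_right t).continuousOn
    exact (ck_cont_integrand hK hf).comp hc (fun s hs => ⟨ht, hs⟩)
  have h1 : IntegrableOn (fun s => K t s (f s)) (tsupport f) volume :=
    ContinuousOn.integrableOn_compact hfc (hgI.mono hfs)
  have hind : (tsupport f).indicator (fun s => K t s (f s)) = (fun s => K t s (f s)) := by
    apply Set.indicator_eq_self.2
    intro s hs
    by_contra hcon
    have : f s = 0 := image_eq_zero_of_notMem_tsupport hcon
    simp [this] at hs
  have h2 : Integrable ((tsupport f).indicator (fun s => K t s (f s))) volume :=
    h1.integrable_indicator (isClosed_tsupport f).measurableSet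
  rw [hind] at h2
  exact h2.integrableOn

lemma ck_aesm_prod {I : Set ℝ} (hImeas : MeasurableSet I) {K : ℝ → ℝ → X →L[ℝ] Y}
    (hK : ContinuousOn (fun ts : ℝ × ℝ => K ts.1 ts.2) (I ×ˢ I))
    {f : ℝ → X} (hf : Continuous f) :
    AEStronglyMeasurable (fun ts : ℝ × ℝ => K ts.1 ts.2 (f ts.2))
      ((volume.restrict I).prod (volume.restrict I)) := by
  rw [Measure.prod_restrict]
  exact (ck_cont_integrand hK hf).aestronglyMeasurable (hImeas.prod hImeas)

lemma ck_aesm_param {I : Set ℝ} (hImeas : MeasurableSet I) {K : ℝ → ℝ → X →L[ℝ] Y}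
    (hK : ContinuousOn (fun ts : ℝ × ℝ => K ts.1 ts.2) (I ×ˢ I))
    {f : ℝ → X} (hf : Continuous f) [CompleteSpace Y]
    {E : Set ℝ} (hE : MeasurableSet E) :
    AEStronglyMeasurable (fun t => ∫ s in I ∩ E, K t s (f s)) (volume.restrict I) := by
  have h := ((ck_aesm_prod hImeas hK hf).indicator
    (MeasurableSet.prod MeasurableSet.univ hE)).integral_prod_right'
  apply h.congr
  apply Filter.Eventually.of_forall
  intro t
  have : ∀ s : ℝ, ((univ ×ˢ E).indicator (fun ts : ℝ × ℝ => K ts.1 ts.2 (f ts.2))) (t, s)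
      = E.indicator (fun s => K t s (f s)) s := by
    intro s
    by_cases hs : s ∈ E <;> simp [Set.indicator_apply, hs]
  simp_rw [this]
  rw [integral_indicator hE, Measure.restrict_restrict hE, Set.inter_comm]

lemma ck_aesm_W {I : Set ℝ} (hImeas : MeasurableSet I) {K : ℝ → ℝ → X →L[ℝ] Y}
    (hK : ContinuousOn (fun ts : ℝ × ℝ => K ts.1 ts.2) (I ×ˢ I))
    {f : ℝ → X} (hf : Continuous f) [CompleteSpace Y] :
    AEStronglyMeasurable (fun t => ∫ s in I ∩ Iio t, K t s (f s)) (volume.restrict I) := by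
  have hE : MeasurableSet {p : ℝ × ℝ | p.2 < p.1} :=
    measurableSet_lt measurable_snd measurable_fst
  have h := ((ck_aesm_prod hImeas hK hf).indicator hE).integral_prod_right'
  apply h.congr
  apply Filter.Eventually.of_forall
  intro t
  have : ∀ s : ℝ, ({p : ℝ × ℝ | p.2 < p.1}.indicator (fun ts : ℝ × ℝ => K ts.1 ts.2 (f ts.2))) (t, s)
      = (Iio t).indicator (fun s => K t s (f s)) s := by
    intro s
    simp [Set.indicator_apply]
  simp_rw [this]
  rw [integral_indicator measurableSet_Iio, Measure.restrict_restrict measurableSet_Iio,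
    Set.inter_comm]

lemma ck_ptwise {pr θ x : ℝ} (hpr : 1 ≤ pr) (hθ : 0 < θ) (hx : 0 ≤ x) :
    x ≤ θ + θ ^ (1 - pr) * x ^ pr := by
  rcases le_or_gt x θ with h | h
  · have h0 : 0 ≤ θ ^ (1 - pr) * x ^ pr :=
      mul_nonneg (Real.rpow_nonneg hθ.le _) (Real.rpow_nonneg hx _)
    linarith
  · have hx0 : 0 < x := hθ.trans h
    have h1 : x ^ (1 - pr) ≤ θ ^ (1 - pr) :=
      Real.rpow_le_rpow_of_nonpos hθ h.le (by linarith)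
    have h2 : x ^ (1 - pr) * x ^ pr = x := by
      rw [← Real.rpow_add hx0]
      norm_num
    have h3 : 0 < x ^ pr := Real.rpow_pos_of_pos hx0 _
    nlinarith

lemma ck_parity_sum (D : ℝ≥0∞) (m : ℕ) :
    (∑ k ∈ Finset.range (2 * m), if Odd k then D else 0) = m * D := by
  induction m with
  | zero => simp
  | succ m ih =>
      have h2 : 2 * (m + 1) = (2 * m) + 1 + 1 := by ring
      rw [h2, Finset.sum_range_succ, Finset.sum_range_succ, ih]
      have ho1 : ¬ Odd (2 * m) := by simp [Nat.not_odd_iff_even]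
      have ho2 : Odd (2 * m + 1) := ⟨m, by ring⟩
      simp only [if_neg ho1, if_pos ho2]
      push_cast
      ring

lemma ck_tsum_ofReal_geom {c w : ℝ} (hc : 0 ≤ c) (hw0 : 0 ≤ w) (hw1 : w < 1) :
    (∑' n : ℕ, ENNReal.ofReal (c * w ^ n)) = ENNReal.ofReal c * ENNReal.ofReal (1 - w)⁻¹ := by
  have h : ∀ n : ℕ, ENNReal.ofReal (c * w ^ n) = ENNReal.ofReal c * (ENNReal.ofReal w) ^ n := by
    intro n; rw [ENNReal.ofReal_mul hc, ENNReal.ofReal_pow hw0]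
  simp_rw [h]
  rw [ENNReal.tsum_mul_left, ENNReal.tsum_geometric]
  congr 1
  rw [ENNReal.ofReal_inv_of_pos (by linarith)]
  congr 1
  rw [ENNReal.ofReal_sub _ hw0, ENNReal.ofReal_one]

end CKAux

set_option maxHeartbeats 2000000 in
/-- **Lemma 3.1 of Smith–Sogge (Christ–Kiselev lemma).** If the integral operator
`Tf(t) = ∫_a^b K(t,s) f(s) ds` is bounded from `L^p((a,b),X)` to `L^q((a,b),Y)` with
`1 ≤ p < q ≤ ∞`, then the truncated operator `Wf(t) = ∫_a^t K(t,s) f(s) ds` is bounded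
with constant `2^{-2(1/p-1/q)}·2C/(1 - 2^{-(1/p-1/q)})`. -/
theorem christ_kiselev
    {X Y : Type*} [NormedAddCommGroup X] [NormedSpace ℝ X] [CompleteSpace X]
    [NormedAddCommGroup Y] [NormedSpace ℝ Y] [CompleteSpace Y]
    (a b : EReal) (hab : a < b)
    (I : Set ℝ) (hI : I = {x : ℝ | a < (x : EReal) ∧ (x : EReal) < b})
    (K : ℝ → ℝ → X →L[ℝ] Y)
    (hK : ContinuousOn (fun ts : ℝ × ℝ => K ts.1 ts.2) (I ×ˢ I))
    (p q : ℝ≥0∞) (hp1 : 1 ≤ p) (hpq : p < q)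
    (C : ℝ) (hC : 0 ≤ C)
    (hT : ∀ f : ℝ → X, Continuous f → HasCompactSupport f → tsupport f ⊆ I →
      eLpNorm (fun t => ∫ s in I, K t s (f s)) q (volume.restrict I)
        ≤ ENNReal.ofReal C * eLpNorm f p (volume.restrict I)) :
    ∀ f : ℝ → X, Continuous f → HasCompactSupport f → tsupport f ⊆ I →
      eLpNorm (fun t => ∫ s in I ∩ Iio t, K t s (f s)) q (volume.restrict I)
        ≤ ENNReal.ofReal
            ((2 : ℝ) ^ (-2 * ((1 / p).toReal - (1 / q).toReal)) * (2 * C) /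
              (1 - (2 : ℝ) ^ (-((1 / p).toReal - (1 / q).toReal)))) *
          eLpNorm f p (volume.restrict I) := by
  intro f hf hfc hfs
  -- basic topology of I
  have hIopen : IsOpen I := by
    rw [hI]
    have h1 : {x : ℝ | a < (x : EReal) ∧ (x : EReal) < b}
        = ((↑) : ℝ → EReal) ⁻¹' (Ioi a ∩ Iio b) := rfl
    rw [h1]
    exact (isOpen_Ioi.inter isOpen_Iio).preimage continuous_coe_real_ereal
  have hImeas : MeasurableSet I := hIopen.measurableSet
  -- exponents
  have hq1 : 1 ≤ q := hp1.trans hpq.le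
  have hq0 : q ≠ 0 := fun h => by simp [h] at hq1
  have hp0 : p ≠ 0 := fun h => by simp [h] at hp1
  have hpfin : p ≠ ∞ := (lt_of_lt_of_le hpq le_top).ne
  set pr : ℝ := p.toReal with hprdef
  have hpr1 : 1 ≤ pr := by
    rw [hprdef, ← ENNReal.toReal_one]
    exact ENNReal.toReal_mono hpfin hp1
  have hpr0 : 0 < pr := lt_of_lt_of_le one_pos hpr1
  set rq : ℝ := (1 / q).toReal with hrqdef
  have hrq0 : 0 ≤ rq := ENNReal.toReal_nonneg
  have hrp_eq : (1 / p).toReal = pr⁻¹ := by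
    rw [one_div, ENNReal.toReal_inv]
  have hrple : pr⁻¹ ≤ 1 := by
    rw [inv_le_one_iff₀]; right; exact hpr1
  have hrqlt : rq < pr⁻¹ := by
    rw [← hrp_eq, hrqdef]
    have h1 : (1 / q) < (1 / p) := by
      rw [one_div, one_div]
      exact ENNReal.inv_lt_inv.2 hpq
    have h2 : (1 / p) ≠ ∞ := by
      rw [one_div, ENNReal.inv_ne_top]
      exact hp0
    exact ENNReal.toReal_strict_mono h2 h1
  have hδ : 0 < pr⁻¹ - rq := by linarith
  -- the auxiliary density nf = ‖f‖^pr
  set nf : ℝ → ℝ := fun s => ‖f s‖ ^ pr with hnfdef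
  have hnf_cont : Continuous nf := hf.norm.rpow_const (fun x => Or.inr hpr0.le)
  have hnf_nonneg : ∀ s, 0 ≤ nf s := fun s => Real.rpow_nonneg (norm_nonneg _) _
  have hnf_zero : ∀ s, f s = 0 → nf s = 0 := by
    intro s h; simp only [hnfdef, h, norm_zero]; exact Real.zero_rpow hpr0.ne'
  have hnf_cs : HasCompactSupport nf := by
    have : nf = (fun x : ℝ => x ^ pr) ∘ (fun s => ‖f s‖) := rfl
    rw [this]
    exact (hfc.norm).comp_left (Real.zero_rpow hpr0.ne')
  have hnf_int : Integrable nf := hnf_cont.integrable_of_hasCompactSupport hnf_cs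
  set Φ : ℝ → ℝ := fun t => ∫ s in I ∩ Iio t, nf s with hΦdef
  set Atot : ℝ := ∫ s in I, nf s with hAtotdef
  -- splitting of Φ
  have hsetsplit : ∀ x y : ℝ, x ≤ y → I ∩ Iio y = (I ∩ Iio x) ∪ (I ∩ Ico x y) := by
    intro x y h
    rw [← Set.inter_union_distrib_left, Iio_union_Ico_eq_Iio h]
  have hdisj : ∀ x y : ℝ, Disjoint (I ∩ Iio x) (I ∩ Ico x y) := by
    intro x y
    refine Set.disjoint_left.2 ?_
    rintro s ⟨_, hs1⟩ ⟨_, hs2⟩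
    exact absurd hs2.1 (not_le.2 hs1)
  have hΦsplit : ∀ x y : ℝ, x ≤ y → Φ y = Φ x + ∫ s in I ∩ Ico x y, nf s := by
    intro x y h
    simp only [hΦdef]
    rw [hsetsplit x y h, setIntegral_union (hdisj x y) (hImeas.inter measurableSet_Ico)
      hnf_int.integrableOn hnf_int.integrableOn]
  have hIcoNonneg : ∀ x y : ℝ, 0 ≤ ∫ s in I ∩ Ico x y, nf s := by
    intro x y
    exact setIntegral_nonneg (hImeas.inter measurableSet_Ico) (fun s _ => hnf_nonneg s)
  have hΦmono : Monotone Φ := by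
    intro x y h
    have := hΦsplit x y h
    have h2 := hIcoNonneg x y
    linarith
  have hΦnonneg : ∀ t, 0 ≤ Φ t :=
    fun t => setIntegral_nonneg (hImeas.inter measurableSet_Iio) (fun s _ => hnf_nonneg s)
  have hΦleA : ∀ t, Φ t ≤ Atot := by
    intro t
    apply setIntegral_mono_set hnf_int.integrableOn
      (Filter.Eventually.of_forall (fun s => hnf_nonneg s))
    exact HasSubset.Subset.eventuallyLE Set.inter_subset_left
  have hAnn : 0 ≤ Atot := setIntegral_nonneg hImeas (fun s _ => hnf_nonneg s)
  -- Lipschitz continuity of Φ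
  obtain ⟨Bnf, hBnf⟩ := hnf_cont.bounded_above_of_compact_support hnf_cs
  have hBnf0 : 0 ≤ Bnf := le_trans (norm_nonneg _) (hBnf 0)
  have hΦdiff : ∀ x y : ℝ, x ≤ y → Φ y - Φ x ≤ Bnf * (y - x) := by
    intro x y h
    have h1 := hΦsplit x y h
    have h2 : ‖∫ s in I ∩ Ico x y, nf s‖ ≤ Bnf * (volume (I ∩ Ico x y)).toReal := by
      apply norm_setIntegral_le_of_norm_le_const
      · exact lt_of_le_of_lt (measure_mono Set.inter_subset_right)
          (by rw [Real.volume_Ico]; exact ENNReal.ofReal_lt_top)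
      · intro s _
        calc ‖nf s‖ = nf s := Real.norm_of_nonneg (hnf_nonneg s)
        _ ≤ Bnf := le_trans (le_abs_self _) (hBnf s)
    have h3 : (volume (I ∩ Ico x y)).toReal ≤ y - x := by
      have h4 : volume (I ∩ Ico x y) ≤ ENNReal.ofReal (y - x) := by
        calc volume (I ∩ Ico x y) ≤ volume (Ico x y) := measure_mono Set.inter_subset_right
        _ = ENNReal.ofReal (y - x) := Real.volume_Ico
      exact le_trans (ENNReal.toReal_mono ENNReal.ofReal_ne_top h4)
        (le_of_eq (ENNReal.toReal_ofReal (by linarith)))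
    have h5 : ∫ s in I ∩ Ico x y, nf s ≤ Bnf * (y - x) := by
      calc ∫ s in I ∩ Ico x y, nf s ≤ ‖∫ s in I ∩ Ico x y, nf s‖ := le_abs_self _
      _ ≤ Bnf * (volume (I ∩ Ico x y)).toReal := h2
      _ ≤ Bnf * (y - x) := by
          apply mul_le_mul_of_nonneg_left h3 hBnf0
    linarith
  have hΦcont : Continuous Φ := by
    have key2 : ∀ x y : ℝ, dist (Φ x) (Φ y) ≤ Bnf * dist x y := by
      intro x y
      rcases le_total x y with h | h
      · rw [Real.dist_eq, Real.dist_eq,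
          abs_of_nonpos (by linarith [hΦmono h] : Φ x - Φ y ≤ 0),
          abs_of_nonpos (by linarith : x - y ≤ 0)]
        have := hΦdiff x y h; linarith
      · rw [Real.dist_eq, Real.dist_eq,
          abs_of_nonneg (by linarith [hΦmono h] : 0 ≤ Φ x - Φ y),
          abs_of_nonneg (by linarith : 0 ≤ x - y)]
        have := hΦdiff y x h; linarith
    exact (LipschitzWith.of_dist_le_mul (K := Bnf.toNNReal)
      (by intro x y; rw [Real.coe_toNNReal Bnf hBnf0]; exact key2 x y)).continuous
  -- piece identities
  have hofnf : ∀ s : ℝ, ENNReal.ofReal (nf s) = (‖f s‖₊ : ℝ≥0∞) ^ pr := by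
    intro s
    rw [← enorm_eq_nnnorm, ← ofReal_norm, ENNReal.ofReal_rpow_of_nonneg (norm_nonneg _) hpr0.le]
  have hlintPiece : ∀ E : Set ℝ,
      (∫⁻ s in I ∩ E, (‖f s‖₊ : ℝ≥0∞) ^ pr) = ENNReal.ofReal (∫ s in I ∩ E, nf s) := by
    intro E
    rw [ofReal_integral_eq_lintegral_ofReal hnf_int.integrableOn
      (Filter.Eventually.of_forall (fun s => hnf_nonneg s))]
    simp_rw [hofnf]
  have hnormPiece : ∀ x y : ℝ, x ≤ y →
      eLpNorm ((Ico x y).indicator f) p (volume.restrict I)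
        = (ENNReal.ofReal (Φ y - Φ x)) ^ (pr⁻¹) := by
    intro x y h
    rw [eLpNorm_indicator_eq_eLpNorm_restrict measurableSet_Ico,
      Measure.restrict_restrict measurableSet_Ico, Set.inter_comm,
      eLpNorm_eq_lintegral_rpow_enorm_toReal hp0 hpfin, ← hprdef, one_div]
    simp only [enorm_eq_nnnorm]
    rw [hlintPiece (Ico x y)]
    have h2 : (∫ s in I ∩ Ico x y, nf s) = Φ y - Φ x := by linarith [hΦsplit x y h]
    rw [h2]
  have hAnorm : eLpNorm f p (volume.restrict I) = (ENNReal.ofReal Atot) ^ (pr⁻¹) := by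
    rw [eLpNorm_eq_lintegral_rpow_enorm_toReal hp0 hpfin, ← hprdef, one_div]
    simp only [enorm_eq_nnnorm]
    congr 1
    rw [hAtotdef, ofReal_integral_eq_lintegral_ofReal hnf_int.integrableOn
      (Filter.Eventually.of_forall (fun s => hnf_nonneg s))]
    simp_rw [hofnf]
  -- trivial case : Atot = 0
  rcases eq_or_lt_of_le hAnn with hA0 | hA
  · have hae : ∀ᵐ s ∂(volume.restrict I), f s = 0 := by
      have h1 : nf =ᶠ[ae (volume.restrict I)] 0 := by
        apply (integral_eq_zero_iff_of_nonneg_ae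
          (Filter.Eventually.of_forall (fun s => hnf_nonneg s)) hnf_int.integrableOn).1
        exact hA0.symm
      filter_upwards [h1] with s hs
      by_contra hne
      have hpos : 0 < nf s := Real.rpow_pos_of_pos (norm_pos_iff.2 hne) _
      rw [hs] at hpos
      exact lt_irrefl _ hpos
    have hzero : ∀ t : ℝ, (∫ s in I ∩ Iio t, K t s (f s)) = 0 := by
      intro t
      rw [Set.inter_comm, ← Measure.restrict_restrict measurableSet_Iio]
      apply integral_eq_zero_of_ae
      filter_upwards [ae_restrict_of_ae hae] with s hs
      simp [hs]
    have hfun : (fun t => ∫ s in I ∩ Iio t, K t s (f s)) = (fun _ => (0 : Y)) :=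
      funext hzero
    rw [hfun, eLpNorm_zero']
    exact zero_le
  -- support bounds
  obtain ⟨Mr, hMr⟩ := hfc.isBounded.subset_closedBall 0
  set lo : ℝ := -(|Mr| + 1) with hlodef
  set hi : ℝ := |Mr| + 1 with hhidef
  have hlohi : lo < hi := by
    have := abs_nonneg Mr
    rw [hlodef, hhidef]; linarith
  have hf_zero_out : ∀ s : ℝ, s < -|Mr| ∨ |Mr| < s → f s = 0 := by
    intro s hs
    apply image_eq_zero_of_notMem_tsupport
    intro hmem
    have h2 := hMr hmem
    rw [Metric.mem_closedBall, Real.dist_eq, sub_zero] at h2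
    have h3 : |s| ≤ |Mr| := le_trans h2 (le_abs_self Mr)
    rcases hs with hs | hs
    · have := neg_abs_le s; linarith [abs_le.1 h3]
    · linarith [abs_le.1 h3]
  have hnf_zero_out : ∀ s : ℝ, s < -|Mr| ∨ |Mr| < s → nf s = 0 :=
    fun s hs => hnf_zero s (hf_zero_out s hs)
  have hΦlo : Φ lo = 0 := by
    simp only [hΦdef]
    rw [setIntegral_congr_fun (hImeas.inter measurableSet_Iio)
      (fun s hs => ?_), integral_zero]
    have h2 : s < -|Mr| := by
      have := hs.2
      simp only [Set.mem_Iio] at this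
      rw [hlodef] at this; linarith
    exact hnf_zero_out s (Or.inl h2)
  have hΦhi : Φ hi = Atot := by
    have hsplit2 : I = (I ∩ Iio hi) ∪ (I ∩ Ici hi) := by
      rw [← Set.inter_union_distrib_left, Set.Iio_union_Ici, Set.inter_univ]
    have hd : Disjoint (I ∩ Iio hi) (I ∩ Ici hi) := by
      refine Set.disjoint_left.2 ?_
      rintro s ⟨_, hs1⟩ ⟨_, hs2⟩
      exact absurd (show hi ≤ s from hs2) (not_le.2 (show s < hi from hs1))
    have h3 : Atot = Φ hi + ∫ s in I ∩ Ici hi, nf s := by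
      rw [hAtotdef]
      conv_lhs => rw [hsplit2]
      rw [setIntegral_union hd (hImeas.inter measurableSet_Ici)
        hnf_int.integrableOn hnf_int.integrableOn]
    have h4 : (∫ s in I ∩ Ici hi, nf s) = 0 := by
      rw [setIntegral_congr_fun (hImeas.inter measurableSet_Ici)
        (fun s hs => ?_), integral_zero]
      have h5 : |Mr| < s := by
        have := hs.2
        simp only [Set.mem_Ici] at this
        rw [hhidef] at this; linarith
      exact hnf_zero_out s (Or.inr h5)
    rw [h4] at h3; linarith
  -- normalized cumulative distribution G and its "inverse" u
  set G : ℝ → ℝ := fun t => Φ t / Atot with hGdef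
  have hGcont : Continuous G := hΦcont.div_const _
  have hGmono : Monotone G := fun x y h => by
    simp only [hGdef]
    gcongr
    exact hΦmono h
  have hG0 : ∀ t, 0 ≤ G t := fun t => div_nonneg (hΦnonneg t) hAnn
  have hG1 : ∀ t, G t ≤ 1 := fun t => by
    rw [hGdef]; simp only
    rw [div_le_one hA]; exact hΦleA t
  have hGlo : G lo = 0 := by
    rw [hGdef]; simp only
    rw [hΦlo, zero_div]
  have hGhi : G hi = 1 := by
    rw [hGdef]; simp only
    rw [hΦhi, div_self hA.ne']
  have hΦG : ∀ t, Φ t = Atot * G t := by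
    intro t
    rw [hGdef]; simp only
    field_simp
  set u : ℝ → ℝ := fun x => sInf {t | t ∈ Icc lo hi ∧ G t = x} with hudef
  have hu_spec : ∀ x, x ∈ Icc (0:ℝ) 1 → u x ∈ Icc lo hi ∧ G (u x) = x := by
    intro x hx
    have hne : {t | t ∈ Icc lo hi ∧ G t = x}.Nonempty := by
      have h2 := intermediate_value_Icc hlohi.le hGcont.continuousOn
      rw [hGlo, hGhi] at h2
      obtain ⟨t, ht1, ht2⟩ := h2 hx
      exact ⟨t, ht1, ht2⟩
    have hclosed : IsClosed {t | t ∈ Icc lo hi ∧ G t = x} := by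
      have h3 : {t | t ∈ Icc lo hi ∧ G t = x} = Icc lo hi ∩ G ⁻¹' {x} := by
        ext t; simp [Set.mem_inter_iff]
      rw [h3]
      exact isClosed_Icc.inter (isClosed_singleton.preimage hGcont)
    have hbdd : BddBelow {t | t ∈ Icc lo hi ∧ G t = x} := ⟨lo, fun t ht => ht.1.1⟩
    exact hclosed.csInf_mem hne hbdd
  have hu_mono : ∀ x y, 0 ≤ x → x ≤ y → y ≤ 1 → u x ≤ u y := by
    intro x y hx hxy hy1
    obtain ⟨huy_mem, huy_G⟩ := hu_spec y ⟨le_trans hx hxy, hy1⟩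
    have h2 := intermediate_value_Icc huy_mem.1 hGcont.continuousOn
    rw [hGlo, huy_G] at h2
    obtain ⟨t, ht1, ht2⟩ := h2 ⟨hx, hxy⟩
    have htmem : t ∈ Icc lo hi := ⟨ht1.1, le_trans ht1.2 huy_mem.2⟩
    calc u x ≤ t := csInf_le ⟨lo, fun r hr => hr.1.1⟩ ⟨htmem, ht2⟩
    _ ≤ u y := ht1.2
  have hΦu : ∀ x, x ∈ Icc (0:ℝ) 1 → Φ (u x) = Atot * x := by
    intro x hx
    rw [hΦG, (hu_spec x hx).2]
  -- dyadic counters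
  set κ : ℕ → ℝ → ℕ := fun n t => min (2 ^ n - 1) ⌊2 ^ n * G t⌋₊ with hκdef
  have hκ_le : ∀ n t, κ n t ≤ 2 ^ n - 1 := fun n t => min_le_left _ _
  have h2n_pos : ∀ n : ℕ, (0:ℝ) < 2 ^ n := fun n => by positivity
  have h2none : ∀ n : ℕ, (1:ℕ) ≤ 2 ^ n := fun n => Nat.one_le_two_pow
  have h2ncast : ∀ n : ℕ, ((2 ^ n - 1 : ℕ) : ℝ) = 2 ^ n - 1 := by
    intro n
    push_cast [h2none n]
    ring
  have hκ_le_G : ∀ n t, (κ n t : ℝ) / 2 ^ n ≤ G t := by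
    intro n t
    rw [div_le_iff₀ (h2n_pos n)]
    have hfl : (⌊2 ^ n * G t⌋₊ : ℝ) ≤ 2 ^ n * G t :=
      Nat.floor_le (mul_nonneg (h2n_pos n).le (hG0 t))
    rcases min_cases (2 ^ n - 1) ⌊2 ^ n * G t⌋₊ with ⟨hmin, hle⟩ | ⟨hmin, _⟩
    · rw [hκdef]; simp only; rw [hmin]
      calc ((2 ^ n - 1 : ℕ) : ℝ) ≤ (⌊2 ^ n * G t⌋₊ : ℝ) := Nat.cast_le.2 hle
      _ ≤ 2 ^ n * G t := hfl
      _ = G t * 2 ^ n := mul_comm _ _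
    · rw [hκdef]; simp only; rw [hmin]
      calc (⌊2 ^ n * G t⌋₊ : ℝ) ≤ 2 ^ n * G t := hfl
      _ = G t * 2 ^ n := mul_comm _ _
  have hG_le_κ : ∀ n t, G t ≤ ((κ n t : ℝ) + 1) / 2 ^ n := by
    intro n t
    rw [le_div_iff₀ (h2n_pos n)]
    rcases min_cases (2 ^ n - 1) ⌊2 ^ n * G t⌋₊ with ⟨hmin, _⟩ | ⟨hmin, _⟩
    · rw [hκdef]; simp only; rw [hmin, h2ncast n]
      have h6 := hG1 t
      nlinarith [h2n_pos n]
    · rw [hκdef]; simp only; rw [hmin]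
      have h7 := (Nat.lt_floor_add_one (2 ^ n * G t)).le
      calc G t * 2 ^ n = 2 ^ n * G t := mul_comm _ _
      _ ≤ (⌊2 ^ n * G t⌋₊ : ℝ) + 1 := h7
  have hκ_doub : ∀ n t, κ (n+1) t = 2 * κ n t ∨ κ (n+1) t = 2 * κ n t + 1 := by
    intro n t
    have h0 : 0 ≤ G t := hG0 t
    have hfl : 2 * ⌊2 ^ n * G t⌋₊ ≤ ⌊2 ^ (n+1) * G t⌋₊ := by
      apply Nat.le_floor
      push_cast
      have h8 := Nat.floor_le (mul_nonneg (h2n_pos n).le h0)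
      calc (2:ℝ) * ⌊2 ^ n * G t⌋₊ ≤ 2 * (2 ^ n * G t) := by linarith
      _ = 2 ^ (n+1) * G t := by ring
    have hfr : ⌊2 ^ (n+1) * G t⌋₊ < 2 * ⌊2 ^ n * G t⌋₊ + 2 := by
      rw [Nat.floor_lt (mul_nonneg (h2n_pos (n+1)).le h0)]
      push_cast
      have h9 := Nat.lt_floor_add_one (2 ^ n * G t)
      calc (2:ℝ) ^ (n+1) * G t = 2 * (2 ^ n * G t) := by ring
      _ < 2 * ((⌊2 ^ n * G t⌋₊ : ℝ) + 1) := by linarith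
      _ = 2 * (⌊2 ^ n * G t⌋₊ : ℝ) + 2 := by ring
    have h1 : (1:ℕ) ≤ 2 ^ n := h2none n
    have h2 : (2:ℕ) ^ (n+1) = 2 * 2 ^ n := by ring
    rw [hκdef]; simp only
    omega
  set P : ℕ → ℝ → ℝ := fun n t => u ((κ n t : ℝ) / 2 ^ n) with hPdef
  have hκdiv_mem : ∀ n t, (κ n t : ℝ) / 2 ^ n ∈ Icc (0:ℝ) 1 := by
    intro n t
    constructor
    · positivity
    · rw [div_le_one (h2n_pos n)]
      calc (κ n t : ℝ) ≤ ((2 ^ n - 1 : ℕ) : ℝ) := Nat.cast_le.2 (hκ_le n t)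
      _ = 2 ^ n - 1 := h2ncast n
      _ ≤ 2 ^ n := by linarith
  have hP_mono : ∀ n t, P n t ≤ P (n+1) t := by
    intro n t
    apply hu_mono _ _ (hκdiv_mem n t).1 _ (hκdiv_mem (n+1) t).2
    have hge : (2 * (κ n t : ℝ)) ≤ (κ (n+1) t : ℝ) := by
      rcases hκ_doub n t with h | h <;> rw [h] <;> push_cast <;> linarith
    have heq : (κ n t : ℝ) / 2 ^ n = (2 * (κ n t : ℝ)) / 2 ^ (n+1) := by
      rw [div_eq_div_iff (h2n_pos n).ne.symm (h2n_pos (n+1)).ne.symm]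
      ring
    rw [heq]
    gcongr
  have hκ0 : ∀ t, κ 0 t = 0 := by
    intro t
    rw [hκdef]; simp
  have hP0 : ∀ t, P 0 t = u 0 := by
    intro t
    rw [hPdef]; simp only [hκ0 t]
    norm_num
  -- integrability of the kernel integrand for t ∈ I
  have hgint : ∀ t ∈ I, IntegrableOn (fun s => K t s (f s)) I volume :=
    fun t ht => ck_integrableOn hK hf hfc hfs ht
  -- extension of the operator bound to sharp cutoffs
  have hL4 : ∀ x y : ℝ, x ≤ y →
      eLpNorm (fun t => ∫ s in I ∩ Ico x y, K t s (f s)) q (volume.restrict I)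
        ≤ ENNReal.ofReal C * (ENNReal.ofReal (Φ y - Φ x)) ^ (pr⁻¹) := by
    intro x y hxy
    set φ : ℕ → ℝ → ℝ := fun m s =>
      max 0 (min 1 (min ((s - x) * (m+1) + 1) ((y - s) * (m+1) + 1))) with hφdef
    have hφcont : ∀ m, Continuous (φ m) := by
      intro m
      apply Continuous.max continuous_const
      apply Continuous.min continuous_const
      apply Continuous.min
      · exact ((continuous_id.sub continuous_const).mul continuous_const).add continuous_const
      · exact ((continuous_const.sub continuous_id).mul continuous_const).add continuous_const
    have hφ0 : ∀ m s, 0 ≤ φ m s := fun m s => le_max_left _ _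
    have hφ1 : ∀ m s, φ m s ≤ 1 := fun m s => max_le zero_le_one (min_le_left _ _)
    have hmpos : ∀ m : ℕ, (0:ℝ) < (m:ℝ) + 1 := fun m => by positivity
    have hφone : ∀ m s, s ∈ Icc x y → φ m s = 1 := by
      intro m s hs
      have h1 : (1:ℝ) ≤ (s - x) * (m+1) + 1 := by nlinarith [hs.1, hmpos m]
      have h2 : (1:ℝ) ≤ (y - s) * (m+1) + 1 := by nlinarith [hs.2, hmpos m]
      rw [hφdef]; simp only
      rw [min_eq_left (le_min h1 h2), max_eq_right zero_le_one]
    have hφzero : ∀ (m : ℕ) (s : ℝ), s < x - 1/((m:ℝ)+1) ∨ y + 1/((m:ℝ)+1) < s → φ m s = 0 := by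
      intro m s hs
      have hm := hmpos m
      rw [hφdef]; simp only
      rcases hs with hs | hs
      · have h1 : (s - x) * (m+1) + 1 ≤ 0 := by
          have h2 : s - x < -(1/((m:ℝ)+1)) := by linarith
          have h3 : (-(1/((m:ℝ)+1))) * ((m:ℝ)+1) + 1 = 0 := by field_simp; ring
          nlinarith
        have h4 : min ((s-x)*((m:ℝ)+1)+1) ((y-s)*((m:ℝ)+1)+1) ≤ 0 :=
          le_trans (min_le_left _ _) h1
        exact max_eq_left (le_trans (min_le_right _ _) h4)
      · have h1 : (y - s) * ((m:ℝ)+1) + 1 ≤ 0 := by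
          have h2 : y - s < -(1/((m:ℝ)+1)) := by linarith
          have h3 : (-(1/((m:ℝ)+1))) * ((m:ℝ)+1) + 1 = 0 := by field_simp; ring
          nlinarith
        have h4 : min ((s-x)*((m:ℝ)+1)+1) ((y-s)*((m:ℝ)+1)+1) ≤ 0 :=
          le_trans (min_le_right _ _) h1
        exact max_eq_left (le_trans (min_le_right _ _) h4)
    set fm : ℕ → ℝ → X := fun m s => φ m s • f s with hfmdef
    have hfmcont : ∀ m, Continuous (fm m) := fun m => (hφcont m).smul hf
    have hfmsupp : ∀ m, tsupport (fm m) ⊆ tsupport f := fun m => tsupport_smul_subset_right _ _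
    have hfmcs : ∀ m, HasCompactSupport (fm m) := by
      intro m
      exact IsCompact.of_isClosed_subset hfc (isClosed_tsupport _) (hfmsupp m)
    have hfmI : ∀ m, tsupport (fm m) ⊆ I := fun m => (hfmsupp m).trans hfs
    have hTm := fun m => hT (fm m) (hfmcont m) (hfmcs m) (hfmI m)
    have hptconv : ∀ t ∈ I, Tendsto (fun m => ∫ s in I, K t s (fm m s)) atTop
        (𝓝 (∫ s in I ∩ Ico x y, K t s (f s))) := by
      intro t ht
      have hgt := hgint t ht
      have htarget : (∫ s in I ∩ Ico x y, K t s (f s))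
          = ∫ s in I, (Icc x y).indicator (fun s => K t s (f s)) s := by
        rw [integral_indicator measurableSet_Icc, Measure.restrict_restrict measurableSet_Icc,
          Set.inter_comm]
        apply setIntegral_congr_set
        exact ae_eq_set_inter Ico_ae_eq_Icc (Filter.EventuallyEq.refl _ _)
      rw [htarget]
      have hsmul : ∀ m s, K t s (fm m s) = φ m s • K t s (f s) := by
        intro m s
        rw [hfmdef]; simp only
        exact (K t s).map_smul _ _
      simp_rw [hsmul]
      apply tendsto_integral_of_dominated_convergence (fun s => ‖K t s (f s)‖)
      · intro m
        exact ((hφcont m).aestronglyMeasurable.restrict).smul hgt.aestronglyMeasurable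
      · exact hgt.norm
      · intro m
        apply Filter.Eventually.of_forall
        intro s
        rw [norm_smul]
        calc ‖φ m s‖ * ‖K t s (f s)‖ ≤ 1 * ‖K t s (f s)‖ := by
              apply mul_le_mul_of_nonneg_right _ (norm_nonneg _)
              rw [Real.norm_eq_abs, abs_of_nonneg (hφ0 m s)]
              exact hφ1 m s
        _ = ‖K t s (f s)‖ := one_mul _
      · apply Filter.Eventually.of_forall
        intro s
        have hev : ∀ᶠ m in atTop, φ m s • (K t s (f s))
            = (Icc x y).indicator (fun s => K t s (f s)) s := by
          by_cases hs : s ∈ Icc x y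
          · apply Filter.Eventually.of_forall
            intro m
            rw [hφone m s hs, one_smul, Set.indicator_of_mem hs]
          · rw [Set.indicator_of_notMem hs]
            rw [Set.mem_Icc, not_and_or, not_le, not_le] at hs
            rcases hs with hs | hs
            · obtain ⟨m0, hm0⟩ := exists_nat_one_div_lt (by linarith : (0:ℝ) < x - s)
              filter_upwards [eventually_ge_atTop m0] with m hm
              have hle : 1/((m:ℝ)+1) ≤ 1/((m0:ℝ)+1) := by
                apply one_div_le_one_div_of_le (by positivity)
                have := (Nat.cast_le (α := ℝ)).2 hm
                linarith
              rw [hφzero m s (Or.inl (by linarith)), zero_smul]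
            · obtain ⟨m0, hm0⟩ := exists_nat_one_div_lt (by linarith : (0:ℝ) < s - y)
              filter_upwards [eventually_ge_atTop m0] with m hm
              have hle : 1/((m:ℝ)+1) ≤ 1/((m0:ℝ)+1) := by
                apply one_div_le_one_div_of_le (by positivity)
                have := (Nat.cast_le (α := ℝ)).2 hm
                linarith
              rw [hφzero m s (Or.inr (by linarith)), zero_smul]
        exact Filter.Tendsto.congr' (hev.mono fun m h => h.symm) tendsto_const_nhds
    have hAESM_Tm : ∀ m, AEStronglyMeasurable
        (fun t => ∫ s in I, K t s (fm m s)) (volume.restrict I) := by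
      intro m
      have h := ck_aesm_param hImeas hK (hfmcont m) MeasurableSet.univ
      simp only [Set.inter_univ] at h
      exact h
    have hFatou := Lp.eLpNorm_lim_le_liminf_eLpNorm (p := q) hAESM_Tm
      (fun t => ∫ s in I ∩ Ico x y, K t s (f s)) ((ae_restrict_mem hImeas).mono hptconv)
    have hnm : ∀ m, eLpNorm (fm m) p (volume.restrict I)
        ≤ (ENNReal.ofReal (Φ (y + 2/((m:ℝ)+1)) - Φ (x - 1/((m:ℝ)+1)))) ^ (pr⁻¹) := by
      intro m
      have hm := hmpos m
      have hmd : (0:ℝ) < 1/((m:ℝ)+1) := by positivity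
      have hxy2 : x - 1/((m:ℝ)+1) ≤ y + 2/((m:ℝ)+1) := by
        have : (0:ℝ) < 2/((m:ℝ)+1) := by positivity
        linarith
      rw [← hnormPiece _ _ hxy2]
      apply eLpNorm_mono
      intro s
      by_cases hs : s ∈ Ico (x - 1/((m:ℝ)+1)) (y + 2/((m:ℝ)+1))
      · rw [Set.indicator_of_mem hs]
        rw [hfmdef]; simp only
        rw [norm_smul]
        calc ‖φ m s‖ * ‖f s‖ ≤ 1 * ‖f s‖ := by
              apply mul_le_mul_of_nonneg_right _ (norm_nonneg _)
              rw [Real.norm_eq_abs, abs_of_nonneg (hφ0 m s)]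
              exact hφ1 m s
        _ = ‖f s‖ := one_mul _
      · rw [Set.indicator_of_notMem hs, norm_zero]
        rw [Set.mem_Ico, not_and_or, not_le, not_lt] at hs
        have hz : φ m s = 0 := by
          apply hφzero
          rcases hs with hs | hs
          · left; linarith
          · right
            have h2 : 1/((m:ℝ)+1) < 2/((m:ℝ)+1) := by
              rw [div_lt_div_iff₀ hm hm]; nlinarith
            linarith
        rw [hfmdef]; simp only [hz, zero_smul, norm_zero, le_refl]
    have hlimreal : Tendsto
        (fun m : ℕ => Φ (y + 2/((m:ℝ)+1)) - Φ (x - 1/((m:ℝ)+1))) atTop (𝓝 (Φ y - Φ x)) := by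
      have t1 : Tendsto (fun m : ℕ => 1/((m:ℝ)+1)) atTop (𝓝 0) :=
        tendsto_one_div_add_atTop_nhds_zero_nat
      have t2 : Tendsto (fun m : ℕ => y + 2/((m:ℝ)+1)) atTop (𝓝 y) := by
        have h3 : Tendsto (fun m : ℕ => 2/((m:ℝ)+1)) atTop (𝓝 0) := by
          have := t1.const_mul (2:ℝ)
          simp only [mul_zero] at this
          apply this.congr
          intro m; field_simp
        have := tendsto_const_nhds (x := y) (f := atTop (α := ℕ)).add h3
        simpa using this
      have t3 : Tendsto (fun m : ℕ => x - 1/((m:ℝ)+1)) atTop (𝓝 x) := by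
        have := tendsto_const_nhds (x := x) (f := atTop (α := ℕ)).sub t1
        simpa using this
      exact ((hΦcont.tendsto y).comp t2).sub ((hΦcont.tendsto x).comp t3)
    have hlim : Tendsto (fun m : ℕ => ENNReal.ofReal C *
        (ENNReal.ofReal (Φ (y + 2/((m:ℝ)+1)) - Φ (x - 1/((m:ℝ)+1)))) ^ (pr⁻¹)) atTop
        (𝓝 (ENNReal.ofReal C * (ENNReal.ofReal (Φ y - Φ x)) ^ (pr⁻¹))) := by
      apply ENNReal.Tendsto.const_mul
      · exact (ENNReal.continuous_rpow_const.tendsto _).comp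
          ((ENNReal.continuous_ofReal.tendsto _).comp hlimreal)
      · exact Or.inr ENNReal.ofReal_ne_top
    calc eLpNorm (fun t => ∫ s in I ∩ Ico x y, K t s (f s)) q (volume.restrict I)
        ≤ atTop.liminf (fun m => eLpNorm (fun t => ∫ s in I, K t s (fm m s)) q (volume.restrict I)) :=
          hFatou
    _ ≤ atTop.liminf (fun m : ℕ => ENNReal.ofReal C *
          (ENNReal.ofReal (Φ (y + 2/((m:ℝ)+1)) - Φ (x - 1/((m:ℝ)+1)))) ^ (pr⁻¹)) := by
        refine Filter.liminf_le_liminf (Filter.Eventually.of_forall fun m => ?_)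
        exact le_trans (hTm m) (mul_le_mul_right (hnm m) _)
    _ = ENNReal.ofReal C * (ENNReal.ofReal (Φ y - Φ x)) ^ (pr⁻¹) := hlim.liminf_eq
  -- the dyadic pieces
  have htsupp_sub : tsupport f ⊆ Icc (-|Mr|) |Mr| := by
    intro s hs
    have h2 := hMr hs
    rw [Metric.mem_closedBall, Real.dist_eq, sub_zero] at h2
    have h3 : |s| ≤ |Mr| := le_trans h2 (le_abs_self Mr)
    exact ⟨neg_le_of_abs_le h3, le_of_abs_le h3⟩
  set V : ℕ → ℕ → ℝ → Y := fun n k t =>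
    ∫ s in I ∩ Ico (u ((k:ℝ)/2^(n+1))) (u (((k:ℝ)+1)/2^(n+1))), K t s (f s) with hVdef
  set gl : ℕ → ℝ → Y := fun n t => ∫ s in I ∩ Ico (P n t) (P (n+1) t), K t s (f s) with hgldef
  have hgl_eq : ∀ n t, gl n t = if Odd (κ (n+1) t) then V n (κ (n+1) t - 1) t else 0 := by
    intro n t
    rcases hκ_doub n t with h | h
    · have hodd : ¬ Odd (κ (n+1) t) := by
        rw [h, Nat.odd_iff]
        omega
      rw [if_neg hodd, hgldef]; simp only
      have hPP : P (n+1) t = P n t := by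
        rw [hPdef]; simp only
        congr 1
        rw [h]; push_cast
        rw [div_eq_div_iff (h2n_pos (n+1)).ne.symm (h2n_pos n).ne.symm]; ring
      rw [hPP, Set.Ico_self, Set.inter_empty]
      simp
    · have hodd : Odd (κ (n+1) t) := by rw [h]; exact ⟨κ n t, by ring⟩
      rw [if_pos hodd, hgldef, hVdef]; simp only
      have hk1 : κ (n+1) t - 1 = 2 * κ n t := by omega
      have e1 : ((κ (n+1) t - 1 : ℕ) : ℝ) / 2^(n+1) = (κ n t : ℝ) / 2^n := by
        rw [hk1]; push_cast
        rw [div_eq_div_iff (h2n_pos (n+1)).ne.symm (h2n_pos n).ne.symm]; ring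
      have e2 : (((κ (n+1) t - 1 : ℕ) : ℝ) + 1) / 2^(n+1) = (κ (n+1) t : ℝ) / 2^(n+1) := by
        have h1 : 1 ≤ κ (n+1) t := by omega
        rw [Nat.cast_sub h1]; push_cast; ring_nf
      rw [hPdef]; simp only
      rw [e1, e2]
  have hdisj2 : ∀ x y z : ℝ, Disjoint (I ∩ Ico x y) (I ∩ Ico y z) := by
    intro x y z
    refine Set.disjoint_left.2 ?_
    rintro s ⟨_, hs1⟩ ⟨_, hs2⟩
    exact absurd hs2.1 (not_le.2 hs1.2)
  have hu0PN : ∀ N t, u 0 ≤ P N t := by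
    intro N t
    rw [hPdef]; simp only
    exact hu_mono 0 _ le_rfl (hκdiv_mem N t).1 (hκdiv_mem N t).2
  have hSN_eq : ∀ t, t ∈ I → ∀ N, (∑ n ∈ Finset.range N, gl n t)
      = ∫ s in I ∩ Ico (u 0) (P N t), K t s (f s) := by
    intro t ht N
    induction N with
    | zero =>
        rw [Finset.sum_range_zero, hP0 t, Set.Ico_self, Set.inter_empty]
        simp
    | succ N ih =>
        rw [Finset.sum_range_succ, ih]
        conv_lhs => rw [hgldef]
        have h1 : u 0 ≤ P N t := hu0PN N t
        have h2 : P N t ≤ P (N+1) t := hP_mono N t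
        have hull : I ∩ Ico (u 0) (P (N+1) t)
            = (I ∩ Ico (u 0) (P N t)) ∪ (I ∩ Ico (P N t) (P (N+1) t)) := by
          rw [← Set.inter_union_distrib_left, Set.Ico_union_Ico_eq_Ico h1 h2]
        rw [hull, setIntegral_union (hdisj2 _ _ _) (hImeas.inter measurableSet_Ico)
          ((hgint t ht).mono_set Set.inter_subset_left)
          ((hgint t ht).mono_set Set.inter_subset_left)]
  -- convergence of the partial sums
  have hconv : ∀ t ∈ I, Tendsto (fun N => ∑ n ∈ Finset.range N, gl n t) atTop
      (𝓝 (∫ s in I ∩ Iio t, K t s (f s))) := by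
    intro t ht
    have hgt := hgint t ht
    obtain ⟨BK0, hBK0⟩ : ∃ B, ∀ s ∈ tsupport f, ‖K t s‖ ≤ B := by
      apply hfc.exists_bound_of_continuousOn
      intro s hs
      have : ContinuousOn (fun s : ℝ => ((t, s) : ℝ × ℝ)) I := (Continuous.prodMk_right t).continuousOn
      exact ((hK.comp this (fun r hr => ⟨ht, hr⟩)).mono hfs) s hs
    set BK : ℝ := max BK0 0 with hBKdef
    have hBK : 0 ≤ BK := le_max_right _ _
    have hBKb : ∀ s ∈ tsupport f, ‖K t s‖ ≤ BK :=
      fun s hs => le_trans (hBK0 s hs) (le_max_left _ _)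
    have hptbd : ∀ θ : ℝ, 0 < θ → ∀ s : ℝ, ‖K t s (f s)‖
        ≤ (Icc (-|Mr|) |Mr|).indicator (fun _ => BK * θ) s + (BK * θ^(1-pr)) * nf s := by
      intro θ hθ s
      by_cases hsupp : s ∈ tsupport f
      · have h1 : ‖K t s (f s)‖ ≤ BK * ‖f s‖ :=
          le_trans ((K t s).le_opNorm (f s))
            (mul_le_mul_of_nonneg_right (hBKb s hsupp) (norm_nonneg _))
        have h2 : ‖f s‖ ≤ θ + θ^(1-pr) * ‖f s‖^pr := ck_ptwise hpr1 hθ (norm_nonneg _)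
        rw [Set.indicator_of_mem (htsupp_sub hsupp)]
        calc ‖K t s (f s)‖ ≤ BK * ‖f s‖ := h1
        _ ≤ BK * (θ + θ^(1-pr) * ‖f s‖^pr) := mul_le_mul_of_nonneg_left h2 hBK
        _ = BK * θ + (BK * θ^(1-pr)) * nf s := by rw [hnfdef]; ring
      · have h0 : f s = 0 := image_eq_zero_of_notMem_tsupport hsupp
        rw [h0]
        simp only [map_zero, norm_zero]
        apply add_nonneg
        · apply Set.indicator_nonneg
          intro r _
          exact mul_nonneg hBK hθ.le
        · exact mul_nonneg (mul_nonneg hBK (Real.rpow_nonneg hθ.le _)) (hnf_nonneg s)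
    have hbd_int : ∀ θ : ℝ, 0 < θ → Integrable (fun s =>
        (Icc (-|Mr|) |Mr|).indicator (fun _ => BK * θ) s + (BK * θ^(1-pr)) * nf s) volume := by
      intro θ hθ
      apply Integrable.add
      · apply (integrable_indicator_iff measurableSet_Icc).2
        exact integrableOn_const (by rw [Real.volume_Icc]; exact ENNReal.ofReal_ne_top)
      · exact hnf_int.const_mul _
    have hJbd : ∀ θ : ℝ, 0 < θ → ∀ x y : ℝ, x ≤ y →
        ‖∫ s in I ∩ Ico x y, K t s (f s)‖
          ≤ BK * θ * (2*|Mr|) + (BK * θ^(1-pr)) * (Φ y - Φ x) := by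
      intro θ hθ x y hxy
      calc ‖∫ s in I ∩ Ico x y, K t s (f s)‖
          ≤ ∫ s in I ∩ Ico x y, ‖K t s (f s)‖ := norm_integral_le_integral_norm _
      _ ≤ ∫ s in I ∩ Ico x y, ((Icc (-|Mr|) |Mr|).indicator (fun _ => BK * θ) s
            + (BK * θ^(1-pr)) * nf s) := by
          apply integral_mono ((hgt.mono_set Set.inter_subset_left).norm)
            ((hbd_int θ hθ).integrableOn)
          exact fun s => hptbd θ hθ s
      _ = (∫ s in I ∩ Ico x y, (Icc (-|Mr|) |Mr|).indicator (fun _ => BK * θ) s)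
            + ∫ s in I ∩ Ico x y, (BK * θ^(1-pr)) * nf s := by
          apply integral_add
          · exact ((integrable_indicator_iff measurableSet_Icc).2
              ((integrableOn_const (by rw [Real.volume_Icc]; exact ENNReal.ofReal_ne_top)))).integrableOn
          · exact (hnf_int.const_mul _).integrableOn
      _ ≤ BK * θ * (2*|Mr|) + (BK * θ^(1-pr)) * (Φ y - Φ x) := by
          apply add_le_add
          · rw [integral_indicator measurableSet_Icc,
              Measure.restrict_restrict measurableSet_Icc, setIntegral_const]
            have hvol : (volume (Icc (-|Mr|) |Mr| ∩ (I ∩ Ico x y))).toReal ≤ 2*|Mr| := by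
              have h4 : volume (Icc (-|Mr|) |Mr| ∩ (I ∩ Ico x y)) ≤ ENNReal.ofReal (2*|Mr|) := by
                calc volume (Icc (-|Mr|) |Mr| ∩ (I ∩ Ico x y)) ≤ volume (Icc (-|Mr|) |Mr|) :=
                    measure_mono Set.inter_subset_left
                _ = ENNReal.ofReal (|Mr| - (-|Mr|)) := Real.volume_Icc
                _ = ENNReal.ofReal (2*|Mr|) := by ring_nf
              exact le_trans (ENNReal.toReal_mono ENNReal.ofReal_ne_top h4)
                (le_of_eq (ENNReal.toReal_ofReal (by positivity)))
            calc (volume (Icc (-|Mr|) |Mr| ∩ (I ∩ Ico x y))).toReal • (BK * θ)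
                = (BK * θ) * (volume (Icc (-|Mr|) |Mr| ∩ (I ∩ Ico x y))).toReal := by
                  rw [smul_eq_mul]; ring
            _ ≤ (BK * θ) * (2*|Mr|) := by
                apply mul_le_mul_of_nonneg_left hvol (mul_nonneg hBK hθ.le)
            _ = BK * θ * (2*|Mr|) := by ring
          · rw [integral_const_mul]
            apply le_of_eq
            congr 1
            linarith [hΦsplit x y hxy]
    -- the error rate
    set θN : ℕ → ℝ := fun N => ((2:ℝ) ^ (-(pr⁻¹))) ^ N with hθNdef
    have hrpos : (0:ℝ) < (2:ℝ) ^ (-(pr⁻¹)) := Real.rpow_pos_of_pos two_pos _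
    have hrlt1 : (2:ℝ) ^ (-(pr⁻¹)) < 1 := by
      apply Real.rpow_lt_one_of_one_lt_of_neg one_lt_two
      have : 0 < pr⁻¹ := by positivity
      linarith
    have hθNpos : ∀ N, 0 < θN N := fun N => pow_pos hrpos N
    have hθNkey : ∀ N : ℕ, (θN N)^(1-pr) * ((2:ℝ)^N)⁻¹ = θN N := by
      intro N
      rw [hθNdef]; simp only
      rw [← Real.rpow_natCast ((2:ℝ) ^ (-(pr⁻¹))) N, ← Real.rpow_natCast (2:ℝ) N,
        ← Real.rpow_mul (by norm_num : (0:ℝ) ≤ 2), ← Real.rpow_neg (by norm_num : (0:ℝ) ≤ 2),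
        ← Real.rpow_mul (by norm_num : (0:ℝ) ≤ 2), ← Real.rpow_add two_pos]
      congr 1
      field_simp
      ring
    have hΦPN : ∀ N, Φ (P N t) ≤ Φ t ∧ Φ t - Φ (P N t) ≤ Atot * ((2:ℝ)^N)⁻¹ := by
      intro N
      have h1 : Φ (P N t) = Atot * ((κ N t : ℝ)/2^N) := by
        rw [hPdef]; simp only
        exact hΦu _ (hκdiv_mem N t)
      have h2 : (κ N t : ℝ)/2^N ≤ G t := hκ_le_G N t
      have h3 : G t ≤ ((κ N t : ℝ)+1)/2^N := hG_le_κ N t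
      have h4 : Φ t = Atot * G t := hΦG t
      have h5 : ((κ N t:ℝ)+1)/2^N - (κ N t:ℝ)/2^N = ((2:ℝ)^N)⁻¹ := by
        field_simp
        ring
      constructor
      · rw [h1, h4]
        nlinarith [hA.le]
      · rw [h1, h4]
        nlinarith [hA.le]
    -- identify the limit
    have hu0mem := hu_spec 0 ⟨le_rfl, zero_le_one⟩
    have hΦu0 : Φ (u 0) = 0 := by
      rw [hΦu 0 ⟨le_rfl, zero_le_one⟩]; ring
    have haez : ∀ᵐ s ∂(volume.restrict (I ∩ Iio (u 0))), f s = 0 := by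
      have h1 : (∫ s in I ∩ Iio (u 0), nf s) = 0 := hΦu0
      have h2 : nf =ᶠ[ae (volume.restrict (I ∩ Iio (u 0)))] 0 :=
        (integral_eq_zero_iff_of_nonneg_ae
          (Filter.Eventually.of_forall (fun s => hnf_nonneg s)) hnf_int.integrableOn).1 h1
      filter_upwards [h2] with s hs
      by_contra hne
      have hpos : 0 < nf s := Real.rpow_pos_of_pos (norm_pos_iff.2 hne) _
      rw [hs] at hpos
      exact lt_irrefl _ hpos
    have hzero_u0 : (∫ s in I ∩ Iio (u 0), K t s (f s)) = 0 := by
      apply integral_eq_zero_of_ae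
      filter_upwards [haez] with s hs
      simp [hs]
    have hkey : ∀ N, ‖(∑ n ∈ Finset.range N, gl n t) - ∫ s in I ∩ Iio t, K t s (f s)‖
        ≤ (BK * (2*|Mr|) + BK * Atot) * θN N := by
      intro N
      have hbound : ‖(∑ n ∈ Finset.range N, gl n t) - ∫ s in I ∩ Iio t, K t s (f s)‖
          ≤ BK * (θN N) * (2*|Mr|) + (BK * (θN N)^(1-pr)) * (Atot * ((2:ℝ)^N)⁻¹) := by
        rw [hSN_eq t ht N]
        rcases le_or_gt (u 0) t with hu0t | hu0t
        · -- main case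
          have hW : (∫ s in I ∩ Iio t, K t s (f s)) = ∫ s in I ∩ Ico (u 0) t, K t s (f s) := by
            rw [hsetsplit (u 0) t hu0t, setIntegral_union (hdisj (u 0) t)
              (hImeas.inter measurableSet_Ico) (hgt.mono_set Set.inter_subset_left)
              (hgt.mono_set Set.inter_subset_left), hzero_u0, zero_add]
          rw [hW]
          rcases le_or_gt (P N t) t with hPt | hPt
          · have hsplit3 : (∫ s in I ∩ Ico (u 0) t, K t s (f s))
                = (∫ s in I ∩ Ico (u 0) (P N t), K t s (f s))
                  + ∫ s in I ∩ Ico (P N t) t, K t s (f s) := by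
              rw [← setIntegral_union (hdisj2 _ _ _) (hImeas.inter measurableSet_Ico)
                (hgt.mono_set Set.inter_subset_left) (hgt.mono_set Set.inter_subset_left),
                ← Set.inter_union_distrib_left, Set.Ico_union_Ico_eq_Ico (hu0PN N t) hPt]
            rw [hsplit3]
            have h6 : ‖(∫ s in I ∩ Ico (u 0) (P N t), K t s (f s))
                - ((∫ s in I ∩ Ico (u 0) (P N t), K t s (f s))
                  + ∫ s in I ∩ Ico (P N t) t, K t s (f s))‖
                = ‖∫ s in I ∩ Ico (P N t) t, K t s (f s)‖ := by
              rw [sub_add_eq_sub_sub, sub_self, zero_sub, norm_neg]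
            rw [h6]
            calc ‖∫ s in I ∩ Ico (P N t) t, K t s (f s)‖
                ≤ BK * (θN N) * (2*|Mr|) + (BK * (θN N)^(1-pr)) * (Φ t - Φ (P N t)) :=
                  hJbd (θN N) (hθNpos N) _ _ hPt
            _ ≤ BK * (θN N) * (2*|Mr|) + (BK * (θN N)^(1-pr)) * (Atot * ((2:ℝ)^N)⁻¹) := by
                apply add_le_add_right
                apply mul_le_mul_of_nonneg_left (hΦPN N).2
                exact mul_nonneg hBK (Real.rpow_nonneg (hθNpos N).le _)
          · have hsplit3 : (∫ s in I ∩ Ico (u 0) (P N t), K t s (f s))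
                = (∫ s in I ∩ Ico (u 0) t, K t s (f s))
                  + ∫ s in I ∩ Ico t (P N t), K t s (f s) := by
              rw [← setIntegral_union (hdisj2 _ _ _) (hImeas.inter measurableSet_Ico)
                (hgt.mono_set Set.inter_subset_left) (hgt.mono_set Set.inter_subset_left),
                ← Set.inter_union_distrib_left, Set.Ico_union_Ico_eq_Ico hu0t hPt.le]
            rw [hsplit3]
            have h6 : ‖((∫ s in I ∩ Ico (u 0) t, K t s (f s))
                  + ∫ s in I ∩ Ico t (P N t), K t s (f s))
                - (∫ s in I ∩ Ico (u 0) t, K t s (f s))‖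
                = ‖∫ s in I ∩ Ico t (P N t), K t s (f s)‖ := by
              rw [add_sub_cancel_left]
            rw [h6]
            calc ‖∫ s in I ∩ Ico t (P N t), K t s (f s)‖
                ≤ BK * (θN N) * (2*|Mr|) + (BK * (θN N)^(1-pr)) * (Φ (P N t) - Φ t) :=
                  hJbd (θN N) (hθNpos N) _ _ hPt.le
            _ ≤ BK * (θN N) * (2*|Mr|) + (BK * (θN N)^(1-pr)) * (Atot * ((2:ℝ)^N)⁻¹) := by
                apply add_le_add_right
                apply mul_le_mul_of_nonneg_left _ (mul_nonneg hBK (Real.rpow_nonneg (hθNpos N).le _))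
                have h7 := (hΦPN N).1
                have h8 : 0 ≤ Atot * ((2:ℝ)^N)⁻¹ := by positivity
                linarith
        · -- t below u 0
          have hGt0 : G t = 0 := by
            have h1 : Φ t ≤ Φ (u 0) := hΦmono hu0t.le
            have h2 : Φ t = 0 := le_antisymm (by rw [hΦu0] at h1; exact h1) (hΦnonneg t)
            rw [hGdef]; simp only
            rw [h2, zero_div]
          have hκN0 : κ N t = 0 := by
            rw [hκdef]; simp only
            rw [hGt0]
            simp
          have hPN0 : P N t = u 0 := by
            rw [hPdef]; simp only [hκN0]
            norm_num
          have hWz : (∫ s in I ∩ Iio t, K t s (f s)) = 0 := by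
            apply integral_eq_zero_of_ae
            have hsub : I ∩ Iio t ⊆ I ∩ Iio (u 0) :=
              Set.inter_subset_inter_right _ (Set.Iio_subset_Iio hu0t.le)
            filter_upwards [ae_restrict_of_ae_restrict_of_subset hsub haez] with s hs
            simp [hs]
          rw [hPN0, hWz, Set.Ico_self, Set.inter_empty]
          simp only [Measure.restrict_empty, integral_zero_measure, sub_zero, norm_zero]
          have h8 : 0 ≤ (θN N)^(1-pr) := Real.rpow_nonneg (hθNpos N).le _
          have h9 : 0 ≤ Atot * ((2:ℝ)^N)⁻¹ := by positivity
          have h10 : (0:ℝ) ≤ 2*|Mr| := by positivity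
          exact add_nonneg (mul_nonneg (mul_nonneg hBK (hθNpos N).le) h10)
            (mul_nonneg (mul_nonneg hBK h8) h9)
      calc ‖(∑ n ∈ Finset.range N, gl n t) - ∫ s in I ∩ Iio t, K t s (f s)‖
          ≤ BK * (θN N) * (2*|Mr|) + (BK * (θN N)^(1-pr)) * (Atot * ((2:ℝ)^N)⁻¹) := hbound
      _ = (BK * (2*|Mr|) + BK * Atot) * θN N := by
          linear_combination (BK * Atot) * hθNkey N
    have htends : Tendsto (fun N => (BK * (2*|Mr|) + BK * Atot) * θN N) atTop (𝓝 0) := by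
      have h1 : Tendsto (fun N => θN N) atTop (𝓝 0) :=
        tendsto_pow_atTop_nhds_zero_of_lt_one hrpos.le hrlt1
      have := h1.const_mul (BK * (2*|Mr|) + BK * Atot)
      simpa using this
    rw [← tendsto_sub_nhds_zero_iff]
    exact squeeze_zero_norm hkey htends
  -- measurability
  have hκmeas : ∀ n, Measurable (κ n) := by
    intro n
    apply Measurable.min measurable_const
    exact Nat.measurable_floor.comp (hGcont.measurable.const_mul _)
  have hInmeas : ∀ n k, MeasurableSet {t' : ℝ | κ (n+1) t' = k} := by
    intro n k
    exact hκmeas (n+1) (measurableSet_singleton k)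
  have hAESM_V : ∀ n k, AEStronglyMeasurable (V n k) (volume.restrict I) := by
    intro n k
    rw [hVdef]
    exact ck_aesm_param hImeas hK hf measurableSet_Ico
  have hgl_sum : ∀ n t, gl n t = ∑ k ∈ Finset.range (2^(n+1)),
      (if Odd k then ({t' : ℝ | κ (n+1) t' = k}).indicator (V n (k-1)) t else 0) := by
    intro n t
    have hκrange : κ (n+1) t ∈ Finset.range (2^(n+1)) := by
      rw [Finset.mem_range]
      have h1 := hκ_le (n+1) t
      have h2 := h2none (n+1)
      omega
    rw [Finset.sum_eq_single (κ (n+1) t)]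
    · rw [hgl_eq n t]
      by_cases hodd : Odd (κ (n+1) t)
      · rw [if_pos hodd, if_pos hodd,
          Set.indicator_of_mem (show t ∈ {t' : ℝ | κ (n+1) t' = κ (n+1) t} from rfl)]
      · rw [if_neg hodd, if_neg hodd]
    · intro k _ hne
      by_cases hodd : Odd k
      · rw [if_pos hodd, Set.indicator_of_notMem]
        intro hmem
        exact hne (Set.mem_setOf_eq ▸ hmem).symm
      · rw [if_neg hodd]
    · intro h
      exact absurd hκrange h
  have hAESM_gl : ∀ n, AEStronglyMeasurable (gl n) (volume.restrict I) := by
    intro n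
    have heq : gl n = fun t => ∑ k ∈ Finset.range (2^(n+1)),
        (if Odd k then ({t' : ℝ | κ (n+1) t' = k}).indicator (V n (k-1)) t else 0) :=
      funext (hgl_sum n)
    rw [heq]
    apply Finset.aestronglyMeasurable_fun_sum
    intro k _
    by_cases hodd : Odd k
    · simp only [if_pos hodd]
      exact (hAESM_V n (k-1)).indicator (hInmeas n k)
    · simp only [if_neg hodd]
      exact aestronglyMeasurable_const
  have hAESM_SN : ∀ N, AEStronglyMeasurable
      (fun t => ∑ n ∈ Finset.range N, gl n t) (volume.restrict I) :=
    fun N => Finset.aestronglyMeasurable_fun_sum _ (fun n _ => hAESM_gl n)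
  -- norm bound for the pieces
  have hVb : ∀ n k : ℕ, k + 1 ≤ 2^(n+1) → eLpNorm (V n k) q (volume.restrict I)
      ≤ ENNReal.ofReal C * ENNReal.ofReal ((Atot * ((2:ℝ)^(n+1))⁻¹) ^ (pr⁻¹)) := by
    intro n k hk
    have hkr : ((k:ℝ) + 1) ≤ 2^(n+1) := by
      have h1 : ((k+1:ℕ):ℝ) ≤ ((2^(n+1):ℕ):ℝ) := Nat.cast_le.2 hk
      push_cast at h1
      linarith
    have hmem1 : ((k:ℝ)/2^(n+1)) ∈ Icc (0:ℝ) 1 := by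
      constructor
      · positivity
      · rw [div_le_one (h2n_pos (n+1))]
        linarith
    have hmem2 : (((k:ℝ)+1)/2^(n+1)) ∈ Icc (0:ℝ) 1 := by
      constructor
      · positivity
      · rw [div_le_one (h2n_pos (n+1))]
        linarith
    have hle : (k:ℝ)/2^(n+1) ≤ ((k:ℝ)+1)/2^(n+1) := by
      gcongr
      linarith
    have huu : u ((k:ℝ)/2^(n+1)) ≤ u (((k:ℝ)+1)/2^(n+1)) :=
      hu_mono _ _ hmem1.1 hle hmem2.2
    have hΦdiff2 : Φ (u (((k:ℝ)+1)/2^(n+1))) - Φ (u ((k:ℝ)/2^(n+1)))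
        = Atot * ((2:ℝ)^(n+1))⁻¹ := by
      rw [hΦu _ hmem2, hΦu _ hmem1]
      field_simp
      ring
    have h := hL4 _ _ huu
    rw [hVdef]; simp only
    refine le_trans h ?_
    rw [hΦdiff2]
    apply mul_le_mul_right
    rw [ENNReal.ofReal_rpow_of_nonneg (mul_nonneg hAnn (by positivity)) (by positivity)]
  -- level bound
  have hglbound : ∀ n : ℕ, eLpNorm (gl n) q (volume.restrict I)
      ≤ ENNReal.ofReal (((2:ℝ)^n) ^ rq) *
        (ENNReal.ofReal C * ENNReal.ofReal ((Atot * ((2:ℝ)^(n+1))⁻¹) ^ (pr⁻¹))) := by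
    intro n
    set B : ℝ≥0∞ := ENNReal.ofReal C * ENNReal.ofReal ((Atot * ((2:ℝ)^(n+1))⁻¹) ^ (pr⁻¹))
      with hBdef
    by_cases hqtop : q = ∞
    · have hrq_eq : rq = 0 := by rw [hrqdef, hqtop]; simp
      rw [hrq_eq, Real.rpow_zero, ENNReal.ofReal_one, one_mul, hqtop, eLpNorm_exponent_top]
      have hae2 : ∀ᵐ t ∂(volume.restrict I), ∀ k ∈ Finset.range (2^(n+1)),
          (‖V n k t‖₊ : ℝ≥0∞) ≤ eLpNormEssSup (V n k) (volume.restrict I) :=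
        (Filter.eventually_all_finset _).2 (fun k _ => enorm_ae_le_eLpNormEssSup (V n k) _)
      have hae3 : ∀ᵐ t ∂(volume.restrict I), (‖gl n t‖₊ : ℝ≥0∞) ≤ B := by
        filter_upwards [hae2] with t hto
        rw [hgl_eq n t]
        by_cases hodd : Odd (κ (n+1) t)
        · rw [if_pos hodd]
          have hkmem : κ (n+1) t - 1 ∈ Finset.range (2^(n+1)) := by
            rw [Finset.mem_range]
            have h1 := hκ_le (n+1) t
            have h2 := h2none (n+1)
            omega
          refine le_trans (hto _ hkmem) ?_
          have h3 : κ (n+1) t - 1 + 1 ≤ 2^(n+1) := by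
            have h1 := hκ_le (n+1) t
            have h2 := h2none (n+1)
            omega
          refine le_trans ?_ (hVb n (κ (n+1) t - 1) h3)
          rw [hqtop] at *
          exact le_of_eq (by rw [eLpNorm_exponent_top])
        · rw [if_neg hodd]
          simp
      exact essSup_le_of_ae_le B hae3
    · have hqr_pos : 0 < q.toReal := ENNReal.toReal_pos hq0 hqtop
      have hrq_eq : rq = (q.toReal)⁻¹ := by rw [hrqdef, one_div, ENNReal.toReal_inv]
      rw [eLpNorm_eq_lintegral_rpow_enorm_toReal hq0 hqtop]
      simp only [enorm_eq_nnnorm]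
      have hcover : I = ⋃ k ∈ Finset.range (2^(n+1)), ({t' : ℝ | κ (n+1) t' = k} ∩ I) := by
        ext t
        simp only [Set.mem_iUnion, Finset.mem_range, Set.mem_inter_iff, Set.mem_setOf_eq]
        constructor
        · intro ht
          refine ⟨κ (n+1) t, ?_, rfl, ht⟩
          have h1 := hκ_le (n+1) t
          have h2 := h2none (n+1)
          omega
        · rintro ⟨k, _, _, ht⟩
          exact ht
      have hdisjk : (↑(Finset.range (2^(n+1))) : Set ℕ).PairwiseDisjoint
          (fun k => {t' : ℝ | κ (n+1) t' = k} ∩ I) := by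
        intro i _ j _ hij
        refine Set.disjoint_left.2 ?_
        rintro t ⟨ht1, _⟩ ⟨ht2, _⟩
        exact hij (ht1.symm.trans ht2)
      have hsplit : (∫⁻ t in I, (‖gl n t‖₊ : ℝ≥0∞) ^ q.toReal)
          = ∑ k ∈ Finset.range (2^(n+1)),
            ∫⁻ t in {t' : ℝ | κ (n+1) t' = k} ∩ I, (‖gl n t‖₊ : ℝ≥0∞) ^ q.toReal := by
        conv_lhs => rw [hcover]
        exact lintegral_biUnion_finset hdisjk (fun k _ => (hInmeas n k).inter hImeas) _
      have hpiecebd : ∀ k ∈ Finset.range (2^(n+1)),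
          (∫⁻ t in {t' : ℝ | κ (n+1) t' = k} ∩ I, (‖gl n t‖₊ : ℝ≥0∞) ^ q.toReal)
            ≤ (if Odd k then B ^ q.toReal else 0) := by
        intro k hk
        by_cases hodd : Odd k
        · rw [if_pos hodd]
          have hbd : ∀ᵐ t ∂volume, t ∈ {t' : ℝ | κ (n+1) t' = k} ∩ I →
              (‖gl n t‖₊ : ℝ≥0∞) ^ q.toReal = (‖V n (k-1) t‖₊ : ℝ≥0∞) ^ q.toReal := by
            apply Filter.Eventually.of_forall
            intro t ht
            rw [hgl_eq n t, ht.1, if_pos (ht.1 ▸ hodd)]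
          rw [setLIntegral_congr_fun_ae ((hInmeas n k).inter hImeas) hbd]
          calc (∫⁻ t in {t' : ℝ | κ (n+1) t' = k} ∩ I, (‖V n (k-1) t‖₊ : ℝ≥0∞) ^ q.toReal)
              ≤ ∫⁻ t in I, (‖V n (k-1) t‖₊ : ℝ≥0∞) ^ q.toReal :=
                lintegral_mono' (Measure.restrict_mono Set.inter_subset_right le_rfl) le_rfl
          _ = (eLpNorm (V n (k-1)) q (volume.restrict I)) ^ q.toReal := by
              rw [eLpNorm_eq_lintegral_rpow_enorm_toReal hq0 hqtop]
              simp only [enorm_eq_nnnorm]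
              rw [← ENNReal.rpow_mul,
                one_div, inv_mul_cancel₀ (ne_of_gt hqr_pos), ENNReal.rpow_one]
          _ ≤ B ^ q.toReal := by
              apply ENNReal.rpow_le_rpow _ hqr_pos.le
              apply hVb n (k-1)
              have h1 := Finset.mem_range.1 hk
              omega
        · rw [if_neg hodd]
          have hbd : ∀ᵐ t ∂volume, t ∈ {t' : ℝ | κ (n+1) t' = k} ∩ I →
              (‖gl n t‖₊ : ℝ≥0∞) ^ q.toReal = 0 := by
            apply Filter.Eventually.of_forall
            intro t ht
            rw [hgl_eq n t, ht.1, if_neg (ht.1 ▸ hodd)]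
            simp only [nnnorm_zero, ENNReal.coe_zero]
            exact ENNReal.zero_rpow_of_pos hqr_pos
          rw [setLIntegral_congr_fun_ae ((hInmeas n k).inter hImeas) hbd]
          simp
      have hsum : (∫⁻ t in I, (‖gl n t‖₊ : ℝ≥0∞) ^ q.toReal)
          ≤ ((2^n : ℕ) : ℝ≥0∞) * B ^ q.toReal := by
        rw [hsplit]
        refine le_trans (Finset.sum_le_sum hpiecebd) ?_
        have h2 : 2^(n+1) = 2 * 2^n := by ring
        rw [h2, ck_parity_sum]
      refine le_trans (ENNReal.rpow_le_rpow hsum (by positivity : (0:ℝ) ≤ 1/q.toReal)) ?_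
      rw [ENNReal.mul_rpow_of_nonneg _ _ (by positivity : (0:ℝ) ≤ 1/q.toReal),
        ← ENNReal.rpow_mul, mul_one_div, div_self (ne_of_gt hqr_pos), ENNReal.rpow_one]
      apply mul_le_mul_left
      apply le_of_eq
      have hcast : ((2^n : ℕ) : ℝ≥0∞) = ENNReal.ofReal ((2:ℝ)^n) := by
        rw [ENNReal.ofReal_pow (by norm_num : (0:ℝ) ≤ 2), ENNReal.ofReal_ofNat]
        push_cast
        ring
      rw [hcast, ENNReal.ofReal_rpow_of_nonneg (by positivity) (by positivity), hrq_eq,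
        one_div]
  -- final assembly
  have hFatou2 := Lp.eLpNorm_lim_le_liminf_eLpNorm (p := q) hAESM_SN
    (fun t => ∫ s in I ∩ Iio t, K t s (f s)) ((ae_restrict_mem hImeas).mono hconv)
  set w : ℝ := (2:ℝ) ^ (rq - pr⁻¹) with hwdef
  have hw0 : 0 < w := Real.rpow_pos_of_pos two_pos _
  have hw1 : w < 1 := Real.rpow_lt_one_of_one_lt_of_neg one_lt_two (by linarith)
  set c0 : ℝ := C * Atot ^ (pr⁻¹) * (2:ℝ) ^ (-(pr⁻¹)) with hc0def
  have hc0nn : 0 ≤ c0 :=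
    mul_nonneg (mul_nonneg hC (Real.rpow_nonneg hAnn _)) (Real.rpow_nonneg (by norm_num) _)
  have hterm : ∀ n : ℕ, ENNReal.ofReal (((2:ℝ)^n) ^ rq) *
      (ENNReal.ofReal C * ENNReal.ofReal ((Atot * ((2:ℝ)^(n+1))⁻¹) ^ (pr⁻¹)))
      = ENNReal.ofReal (c0 * w ^ n) := by
    intro n
    rw [← mul_assoc, ← ENNReal.ofReal_mul (Real.rpow_nonneg (by positivity) _),
      ← ENNReal.ofReal_mul (mul_nonneg (Real.rpow_nonneg (by positivity) _) hC)]
    congr 1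
    have eA : (Atot * ((2:ℝ)^(n+1))⁻¹) ^ (pr⁻¹)
        = Atot ^ (pr⁻¹) * ((2:ℝ)^(n+1)) ^ (-(pr⁻¹)) := by
      rw [Real.mul_rpow hAnn (by positivity), Real.inv_rpow (by positivity),
        ← Real.rpow_neg (by positivity)]
    have e2 : ((2:ℝ)^n) ^ rq = (2:ℝ) ^ ((n:ℝ) * rq) := by
      rw [← Real.rpow_natCast (2:ℝ) n, ← Real.rpow_mul (by norm_num)]
    have e3 : ((2:ℝ)^(n+1)) ^ (-(pr⁻¹)) = (2:ℝ) ^ (((n+1:ℕ):ℝ) * (-(pr⁻¹))) := by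
      rw [← Real.rpow_natCast (2:ℝ) (n+1), ← Real.rpow_mul (by norm_num)]
    have e4 : w ^ n = (2:ℝ) ^ ((rq - pr⁻¹) * (n:ℝ)) := by
      rw [hwdef, ← Real.rpow_natCast ((2:ℝ) ^ (rq - pr⁻¹)) n,
        ← Real.rpow_mul (by norm_num)]
    rw [eA, e2, e3, hc0def, e4]
    calc (2:ℝ) ^ ((n:ℝ) * rq) * C * (Atot ^ (pr⁻¹) * (2:ℝ) ^ (((n+1:ℕ):ℝ) * (-(pr⁻¹))))
        = C * Atot ^ (pr⁻¹) *
          ((2:ℝ) ^ ((n:ℝ) * rq) * (2:ℝ) ^ (((n+1:ℕ):ℝ) * (-(pr⁻¹)))) := by ring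
    _ = C * Atot ^ (pr⁻¹) * (2:ℝ) ^ ((n:ℝ) * rq + ((n+1:ℕ):ℝ) * (-(pr⁻¹))) := by
        rw [← Real.rpow_add two_pos]
    _ = C * Atot ^ (pr⁻¹) * (2:ℝ) ^ (-(pr⁻¹) + (rq - pr⁻¹) * (n:ℝ)) := by
        congr 1
        push_cast
        ring
    _ = C * Atot ^ (pr⁻¹) * ((2:ℝ) ^ (-(pr⁻¹)) * (2:ℝ) ^ ((rq - pr⁻¹) * (n:ℝ))) := by
        rw [← Real.rpow_add two_pos]
    _ = C * Atot ^ (pr⁻¹) * (2:ℝ) ^ (-(pr⁻¹)) * (2:ℝ) ^ ((rq - pr⁻¹) * (n:ℝ)) := by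
        ring
  have hseries : ∀ N, (∑ n ∈ Finset.range N, eLpNorm (gl n) q (volume.restrict I))
      ≤ ENNReal.ofReal c0 * ENNReal.ofReal (1 - w)⁻¹ := by
    intro N
    calc (∑ n ∈ Finset.range N, eLpNorm (gl n) q (volume.restrict I))
        ≤ ∑ n ∈ Finset.range N, ENNReal.ofReal (c0 * w ^ n) := by
          apply Finset.sum_le_sum
          intro n _
          rw [← hterm n]
          exact hglbound n
    _ ≤ ∑' n : ℕ, ENNReal.ofReal (c0 * w ^ n) := ENNReal.sum_le_tsum _
    _ = ENNReal.ofReal c0 * ENNReal.ofReal (1 - w)⁻¹ := ck_tsum_ofReal_geom hc0nn hw0.le hw1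
  have hmain : eLpNorm (fun t => ∫ s in I ∩ Iio t, K t s (f s)) q (volume.restrict I)
      ≤ ENNReal.ofReal c0 * ENNReal.ofReal (1 - w)⁻¹ := by
    refine le_trans hFatou2 ?_
    have hstep : ∀ N : ℕ, eLpNorm (fun t => ∑ n ∈ Finset.range N, gl n t) q (volume.restrict I)
        ≤ ENNReal.ofReal c0 * ENNReal.ofReal (1 - w)⁻¹ := by
      intro N
      have heq : (fun t => ∑ n ∈ Finset.range N, gl n t)
          = (∑ n ∈ Finset.range N, gl n) := by
        funext t
        simp
      rw [heq]
      exact le_trans (eLpNorm_sum_le (fun n _ => hAESM_gl n) hq1) (hseries N)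
    refine le_trans (Filter.liminf_le_liminf (Filter.Eventually.of_forall hstep)) ?_
    rw [Filter.liminf_const]
  -- arithmetic comparison of the constants
  rw [hrp_eq, hAnorm]
  have hwrw : (2:ℝ)^(-(pr⁻¹ - rq)) = w := by rw [hwdef, neg_sub]
  rw [hwrw]
  have hwpos : 0 < 1 - w := by linarith
  have hnum_nonneg : 0 ≤ (2:ℝ)^(-2*(pr⁻¹ - rq)) * (2*C) / (1 - w) :=
    div_nonneg (mul_nonneg (Real.rpow_nonneg (by norm_num) _) (by linarith)) hwpos.le
  rw [ENNReal.ofReal_rpow_of_nonneg hAnn (by positivity),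
    ← ENNReal.ofReal_mul hnum_nonneg]
  refine le_trans hmain ?_
  rw [← ENNReal.ofReal_mul hc0nn]
  apply ENNReal.ofReal_le_ofReal
  have h1 : (2:ℝ)^(-(pr⁻¹)) ≤ (2:ℝ)^(-2*(pr⁻¹ - rq)) * 2 := by
    have h2 : (2:ℝ)^(-2*(pr⁻¹-rq)) * 2 = 2^(1 - 2*(pr⁻¹ - rq)) := by
      rw [show (1:ℝ) - 2*(pr⁻¹ - rq) = -2*(pr⁻¹ - rq) + 1 by ring,
        Real.rpow_add two_pos, Real.rpow_one]
    rw [h2]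
    apply Real.rpow_le_rpow_of_exponent_le one_le_two
    linarith
  have h4 : 0 ≤ C * Atot ^ (pr⁻¹) * (1-w)⁻¹ :=
    mul_nonneg (mul_nonneg hC (Real.rpow_nonneg hAnn _)) (inv_nonneg.2 hwpos.le)
  calc c0 * (1-w)⁻¹ = (C * Atot^(pr⁻¹) * (1-w)⁻¹) * (2:ℝ)^(-(pr⁻¹)) := by
        rw [hc0def]; ring
  _ ≤ (C * Atot^(pr⁻¹) * (1-w)⁻¹) * ((2:ℝ)^(-2*(pr⁻¹-rq)) * 2) :=
        mul_le_mul_of_nonneg_left h1 h4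
  _ = (2:ℝ)^(-2*(pr⁻¹ - rq)) * (2*C) / (1 - w) * Atot ^ (pr⁻¹) := by
        rw [div_eq_mul_inv]; ring
end
end

section
/- For every x, y ∈ [0,1) with x < y, there exists exactly one pair of dyadic intervals (I, J) with I ∼ J such that x ∈ I and y ∈ J. Equivalently, for all x < y in [0,1), the indicator 1_{{x<y}} satisfies 1 = Σ_{(I,J): I∼J} 1_I(x) 1_J(y), i.e. there exist unique integers j ≥ 2 and 0 ≤ k < m < 2^j with x ∈ [k·2^{−j}, (k+1)·2^{−j}), y ∈ [m·2^{−j}, (m+1)·2^{−j}), m ≥ k+2, and ⌊m/2⌋ = ⌊k/2⌋ + 1. -/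
/-!
Write `a j = ⌊x 2^j⌋` and `b j = ⌊y 2^j⌋` for the indices of the generation-`j` dyadic intervals
containing `x` and `y`; passing to the parent halves both indices. Hence once the gap
`b j - a j` reaches 2 it stays at least 2, and a level `j + 1` satisfies the Whitney condition
(gap at least 2, adjacent parents) exactly when the gap reaches 2 for the first time there.
The gap is 0 at level 0 and eventually reaches 2 because `(y - x) 2^j → ∞`.
-/

open Set

theorem Nat.existsUnique_not_and_succ {P : ℕ → Prop} (hP : ∀ n, P n → P (n + 1)) (h0 : ¬P 0)
    (hex : ∃ n, P n) : ∃! n, ¬P n ∧ P (n + 1) := by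
  classical
  have hmono : Monotone P := monotone_nat_of_le_succ hP
  obtain ⟨n, hn⟩ : ∃ n, Nat.find hex = n + 1 :=
    Nat.exists_eq_succ_of_ne_zero fun h ↦ h0 (h ▸ Nat.find_spec hex)
  refine ⟨n, ⟨Nat.find_min hex (by omega), hn ▸ Nat.find_spec hex⟩, fun m ⟨hm, hm1⟩ ↦ ?_⟩
  have hle : Nat.find hex ≤ m + 1 := Nat.find_min' hex hm1
  have hlt : ¬Nat.find hex ≤ m := fun h ↦ hm (hmono h (Nat.find_spec hex))
  omega

section HalvingSequences

variable {a b : ℕ → ℕ} (ha : ∀ j, a (j + 1) / 2 = a j) (hb : ∀ j, b (j + 1) / 2 = b j)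
include ha hb

theorem add_two_le_succ_of_add_two_le {j : ℕ} (h : a j + 2 ≤ b j) :
    a (j + 1) + 2 ≤ b (j + 1) := by
  have := ha j; have := hb j; omega

theorem whitney_succ_iff {j : ℕ} (hab : a j ≤ b j) :
    a (j + 1) + 2 ≤ b (j + 1) ∧ b (j + 1) / 2 = a (j + 1) / 2 + 1 ↔
      ¬a j + 2 ≤ b j ∧ a (j + 1) + 2 ≤ b (j + 1) := by
  have := ha j; have := hb j; omega

theorem existsUnique_whitney_level (hab : ∀ j, a j ≤ b j) (h0 : b 0 < a 0 + 2)
    (hex : ∃ j, a j + 2 ≤ b j) : ∃! j, a j + 2 ≤ b j ∧ b j / 2 = a j / 2 + 1 := by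
  obtain ⟨i, hi, huniq⟩ := Nat.existsUnique_not_and_succ (P := fun j ↦ a j + 2 ≤ b j)
    (fun _ ↦ add_two_le_succ_of_add_two_le ha hb) (by omega) hex
  refine ⟨i + 1, (whitney_succ_iff ha hb (hab i)).2 hi, fun j hj ↦ ?_⟩
  cases j with
  | zero => omega
  | succ j => rw [huniq j ((whitney_succ_iff ha hb (hab j)).1 hj)]

end HalvingSequences

noncomputable def dyadicIndex (t : ℝ) (j : ℕ) : ℕ := ⌊t * 2 ^ j⌋₊

theorem mem_Ico_dyadic_iff {t : ℝ} (ht : 0 ≤ t) (j k : ℕ) :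
    t ∈ Ico ((k : ℝ) / 2 ^ j) (((k : ℝ) + 1) / 2 ^ j) ↔ dyadicIndex t j = k := by
  rw [dyadicIndex, mem_Ico, div_le_iff₀ (by positivity), lt_div_iff₀ (by positivity),
    Nat.floor_eq_iff (by positivity)]

theorem dyadicIndex_succ_div_two (t : ℝ) (j : ℕ) :
    dyadicIndex t (j + 1) / 2 = dyadicIndex t j := by
  rw [dyadicIndex, dyadicIndex, ← Nat.floor_div_natCast]
  congr 1
  push_cast
  ring

theorem dyadicIndex_mono {x y : ℝ} (hxy : x ≤ y) (j : ℕ) : dyadicIndex x j ≤ dyadicIndex y j :=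
  Nat.floor_le_floor (by gcongr)

theorem dyadicIndex_lt_two_pow {t : ℝ} (ht : t < 1) (j : ℕ) : dyadicIndex t j < 2 ^ j := by
  rw [dyadicIndex, Nat.floor_lt' (by positivity)]
  push_cast
  exact mul_lt_of_lt_one_left (by positivity) ht

theorem exists_dyadicIndex_add_two_le {x y : ℝ} (hx : 0 ≤ x) (hxy : x < y) :
    ∃ j, dyadicIndex x j + 2 ≤ dyadicIndex y j := by
  obtain ⟨j, hj⟩ := pow_unbounded_of_one_lt (2 / (y - x)) one_lt_two
  rw [div_lt_iff₀ (sub_pos.2 hxy)] at hj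
  have hx' : (dyadicIndex x j : ℝ) ≤ x * 2 ^ j := Nat.floor_le (by positivity)
  have hy' : y * 2 ^ j < dyadicIndex y j + 1 := Nat.lt_floor_add_one _
  refine ⟨j, ?_⟩
  have : (dyadicIndex x j : ℝ) + 1 < dyadicIndex y j := by nlinarith
  exact_mod_cast this

/-- The Whitney-type decomposition of the triangle `{x < y}` in `[0,1)²` used in the proof
of the Christ–Kiselev Lemma 3.1 of Smith–Sogge: for `x < y` in `[0,1)` there exist unique
integers `j ≥ 2` and `0 ≤ k < m < 2^j` with `x ∈ [k·2^{-j}, (k+1)·2^{-j})`,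
`y ∈ [m·2^{-j}, (m+1)·2^{-j})`, `m ≥ k+2`, and `⌊m/2⌋ = ⌊k/2⌋ + 1`. -/
theorem dyadic_whitney_decomposition :
    ∀ x y : ℝ, x ∈ Ico (0 : ℝ) 1 → y ∈ Ico (0 : ℝ) 1 → x < y →
      ∃! jkm : ℕ × ℕ × ℕ,
        2 ≤ jkm.1 ∧
        jkm.2.1 < jkm.2.2 ∧
        jkm.2.2 < 2 ^ jkm.1 ∧
        jkm.2.1 + 2 ≤ jkm.2.2 ∧
        jkm.2.2 / 2 = jkm.2.1 / 2 + 1 ∧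
        x ∈ Ico ((jkm.2.1 : ℝ) / 2 ^ jkm.1) (((jkm.2.1 : ℝ) + 1) / 2 ^ jkm.1) ∧
        y ∈ Ico ((jkm.2.2 : ℝ) / 2 ^ jkm.1) (((jkm.2.2 : ℝ) + 1) / 2 ^ jkm.1) := by
  intro x y hx hy hxy
  have hy0 : dyadicIndex y 0 < 1 := by simpa using dyadicIndex_lt_two_pow hy.2 0
  obtain ⟨j, ⟨hgap, hparents⟩, huniq⟩ :=
    existsUnique_whitney_level (dyadicIndex_succ_div_two x) (dyadicIndex_succ_div_two y)
      (dyadicIndex_mono hxy.le) (by omega) (exists_dyadicIndex_add_two_le hx.1 hxy)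
  have hlt := dyadicIndex_lt_two_pow hy.2 j
  have hj : 2 ≤ j := (Nat.pow_lt_pow_iff_right one_lt_two).1 (by omega : 2 ^ 1 < 2 ^ j)
  refine ⟨(j, dyadicIndex x j, dyadicIndex y j), ⟨hj, (by omega : dyadicIndex x j < dyadicIndex y j), hlt, hgap, hparents,
    (mem_Ico_dyadic_iff hx.1 j _).2 rfl, (mem_Ico_dyadic_iff hy.1 j _).2 rfl⟩, ?_⟩
  rintro ⟨i, k, m⟩ ⟨-, -, -, hgap', hparents', hxI, hyJ⟩
  dsimp only at hgap' hparents' hxI hyJ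
  rw [mem_Ico_dyadic_iff hx.1] at hxI
  rw [mem_Ico_dyadic_iff hy.1] at hyJ
  subst hxI hyJ
  rw [huniq i ⟨hgap', hparents'⟩]
end
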